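/- arXiv:2509.25942 — 7 statements merged into one kernel-verified Lean document; each statement's English description precedes it below -/
import Mathlib

section
/- Let Γ^A ∈ ℂ^{m×r}, Γ^D ∈ ℂ^{r×n} and set X_0 = Γ^A Γ^D, X_{s+1} = H_0 + F_0 X_s (I − G_0 X_s)^{−1} E_0, assuming I − G_0 X_s is invertible for every s < t. Then the matrix I − [T^D_t; Γ^D U^D_t] · [T^A_t, V^A_t Γ^A] (block column times block row) is invertible and X_t = [U^A_t, Ã^t Γ^A] · ( I − [T^D_t; Γ^D U^D_t] · [T^A_t, V^A_t Γ^A] )^{−1} · [V^D_t; Γ^D D̃^t]. -/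
open Matrix

set_option linter.unusedSectionVars false
set_option maxHeartbeats 1600000

namespace Stmt9Aux



variable {i j s t : Type*} [Fintype i] [Fintype j] [Fintype s] [Fintype t]
  [DecidableEq i] [DecidableEq j] [DecidableEq s] [DecidableEq t]

/-- determinant factorization for a Woodbury-type Schur complement -/
lemma wood_det (M : Matrix i i ℂ) (N : Matrix j j ℂ) (L1 : Matrix i s ℂ) (R1 : Matrix s j ℂ)
    (L2 : Matrix j t ℂ) (R2 : Matrix t i ℂ) (hM : IsUnit M.det) :
    (M - L1 * (R1 * N⁻¹ * L2) * R2).det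
      = M.det * ((1 : Matrix s s ℂ) - (R1 * N⁻¹ * L2) * (R2 * M⁻¹ * L1)).det := by
  have h1 : M - L1 * (R1 * N⁻¹ * L2) * R2
      = M * (1 - M⁻¹ * (L1 * (R1 * N⁻¹ * L2) * R2)) := by
    rw [Matrix.mul_sub, Matrix.mul_one, Matrix.mul_nonsing_inv_cancel_left _ _ hM]
  rw [h1, det_mul]
  congr 1
  have h2 : (1 : Matrix i i ℂ) - M⁻¹ * (L1 * (R1 * N⁻¹ * L2) * R2)
      = 1 - (M⁻¹ * (L1 * (R1 * N⁻¹ * L2))) * R2 := by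
    simp only [Matrix.mul_assoc]
  rw [h2, Matrix.det_one_sub_mul_comm]
  have h3 : (1 : Matrix t t ℂ) - R2 * (M⁻¹ * (L1 * (R1 * N⁻¹ * L2)))
      = 1 - (R2 * M⁻¹ * L1) * (R1 * N⁻¹ * L2) := by simp only [Matrix.mul_assoc]
  rw [h3, Matrix.det_one_sub_mul_comm]

/-- explicit inverse (Woodbury) -/
lemma wood_inv (M : Matrix i i ℂ) (N : Matrix j j ℂ) (L1 : Matrix i s ℂ) (R1 : Matrix s j ℂ)
    (L2 : Matrix j t ℂ) (R2 : Matrix t i ℂ) (hM : IsUnit M.det)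
    (hZ : IsUnit ((1 : Matrix s s ℂ) - (R1 * N⁻¹ * L2) * (R2 * M⁻¹ * L1))) :
    (M - L1 * (R1 * N⁻¹ * L2) * R2)⁻¹
      = M⁻¹ + M⁻¹ * (L1 * (((1 - (R1 * N⁻¹ * L2) * (R2 * M⁻¹ * L1))⁻¹) *
          ((R1 * N⁻¹ * L2) * (R2 * M⁻¹)))) := by
  set Y1 := R1 * N⁻¹ * L2 with hY1
  set Z := ((1 : Matrix s s ℂ) - Y1 * (R2 * M⁻¹ * L1))⁻¹ with hZdef
  have hZd : IsUnit ((1 : Matrix s s ℂ) - Y1 * (R2 * M⁻¹ * L1)).det :=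
    (Matrix.isUnit_iff_isUnit_det _).mp hZ
  have h2 : ∀ V : Matrix s i ℂ, Y1 * (R2 * (M⁻¹ * (L1 * (Z * V)))) = Z * V - V := by
    intro V
    have base : (Y1 * (R2 * M⁻¹ * L1)) * Z = Z - 1 := by
      have := Matrix.mul_nonsing_inv _ hZd
      calc (Y1 * (R2 * M⁻¹ * L1)) * Z
          = Z - ((1 - Y1 * (R2 * M⁻¹ * L1)) * Z) := by
            rw [Matrix.sub_mul, Matrix.one_mul]; abel
        _ = Z - 1 := by rw [this]
    calc Y1 * (R2 * (M⁻¹ * (L1 * (Z * V)))) = ((Y1 * (R2 * M⁻¹ * L1)) * Z) * V := by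
          simp only [Matrix.mul_assoc]
      _ = (Z - 1) * V := by rw [base]
      _ = Z * V - V := by rw [Matrix.sub_mul, Matrix.one_mul]
  apply Matrix.inv_eq_right_inv
  rw [Matrix.sub_mul, Matrix.mul_add, Matrix.mul_add,
    Matrix.mul_nonsing_inv _ hM, Matrix.mul_nonsing_inv_cancel_left _ _ hM]
  have h3 : L1 * Y1 * R2 * (M⁻¹ * (L1 * (Z * (Y1 * (R2 * M⁻¹)))))
      = L1 * (Y1 * (R2 * (M⁻¹ * (L1 * (Z * (Y1 * (R2 * M⁻¹))))))) := by
    simp only [Matrix.mul_assoc]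
  rw [h3, h2]
  have h4 : L1 * Y1 * R2 * M⁻¹ = L1 * (Y1 * (R2 * M⁻¹)) := by simp only [Matrix.mul_assoc]
  rw [h4, Matrix.mul_sub]
  abel


lemma wood_solve (M : Matrix i i ℂ) (N : Matrix j j ℂ) (L1 : Matrix i s ℂ) (R1 : Matrix s j ℂ)
    (L2 : Matrix j t ℂ) (R2 : Matrix t i ℂ) (hM : IsUnit M.det)
    (hZ : IsUnit ((1 : Matrix s s ℂ) - (R1 * N⁻¹ * L2) * (R2 * M⁻¹ * L1))) :
    (M - L1 * (R1 * N⁻¹ * L2) * R2)⁻¹ * (L1 * R1) * N⁻¹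
      = M⁻¹ * (L1 * (((1 - (R1 * N⁻¹ * L2) * (R2 * M⁻¹ * L1))⁻¹) * (R1 * N⁻¹))) := by
  set Y1 := R1 * N⁻¹ * L2 with hY1
  set Z := ((1 : Matrix s s ℂ) - Y1 * (R2 * M⁻¹ * L1))⁻¹ with hZdef
  have hZd : IsUnit ((1 : Matrix s s ℂ) - Y1 * (R2 * M⁻¹ * L1)).det :=
    (Matrix.isUnit_iff_isUnit_det _).mp hZ
  have hzz : Z * (Y1 * (R2 * M⁻¹ * L1)) = Z - 1 := by
    have h := Matrix.nonsing_inv_mul _ hZd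
    rw [Matrix.mul_sub, Matrix.mul_one] at h
    rw [← sub_sub_cancel Z (Z * (Y1 * (R2 * M⁻¹ * L1))), h]
  have k1 : Z * (Y1 * (R2 * (M⁻¹ * (L1 * (R1 * N⁻¹)))))
      = Z * (R1 * N⁻¹) - R1 * N⁻¹ := by
    calc Z * (Y1 * (R2 * (M⁻¹ * (L1 * (R1 * N⁻¹)))))
        = (Z * (Y1 * (R2 * M⁻¹ * L1))) * (R1 * N⁻¹) := by simp only [Matrix.mul_assoc]
      _ = (Z - 1) * (R1 * N⁻¹) := by rw [hzz]
      _ = Z * (R1 * N⁻¹) - R1 * N⁻¹ := by rw [Matrix.sub_mul, Matrix.one_mul]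
  rw [wood_inv M N L1 R1 L2 R2 hM hZ, Matrix.add_mul, Matrix.add_mul]
  have h3 : M⁻¹ * (L1 * (Z * (Y1 * (R2 * M⁻¹)))) * (L1 * R1) * N⁻¹
      = M⁻¹ * (L1 * (Z * (Y1 * (R2 * (M⁻¹ * (L1 * (R1 * N⁻¹))))))) := by
    simp only [Matrix.mul_assoc]
  have h4 : M⁻¹ * (L1 * R1) * N⁻¹ = M⁻¹ * (L1 * (R1 * N⁻¹)) := by
    simp only [Matrix.mul_assoc]
  rw [h3, h4, k1, Matrix.mul_sub, Matrix.mul_sub]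
  abel

lemma push_inv {s t : Type*} [Fintype s] [Fintype t] [DecidableEq s] [DecidableEq t]
    (P : Matrix s t ℂ) (Q : Matrix t s ℂ) (hZ : IsUnit ((1 : Matrix s s ℂ) - P * Q)) :
    IsUnit ((1 : Matrix t t ℂ) - Q * P) ∧
    ((1 : Matrix t t ℂ) - Q * P)⁻¹ = 1 + Q * ((1 - P * Q)⁻¹ * P) ∧
    ∀ {w : Type*} [Fintype w] (V : Matrix s w ℂ),
      ((1 : Matrix t t ℂ) - Q * P)⁻¹ * (Q * V) = Q * ((1 - P * Q)⁻¹ * V) := by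
  set Z := ((1 : Matrix s s ℂ) - P * Q)⁻¹ with hZdef
  have hZd : IsUnit ((1 : Matrix s s ℂ) - P * Q).det :=
    (Matrix.isUnit_iff_isUnit_det _).mp hZ
  have hW : IsUnit ((1 : Matrix t t ℂ) - Q * P) := by
    rw [Matrix.isUnit_iff_isUnit_det, Matrix.det_one_sub_mul_comm]
    exact hZd
  have hzz : Z * (P * Q) = Z - 1 := by
    have h := Matrix.nonsing_inv_mul _ hZd
    rw [Matrix.mul_sub, Matrix.mul_one] at h
    rw [← sub_sub_cancel Z (Z * (P * Q)), h]
  have hzz' : (P * Q) * Z = Z - 1 := by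
    have h := Matrix.mul_nonsing_inv _ hZd
    rw [Matrix.sub_mul, Matrix.one_mul] at h
    rw [← sub_sub_cancel Z ((P * Q) * Z), h]
  have hwinv : ((1 : Matrix t t ℂ) - Q * P)⁻¹ = 1 + Q * (Z * P) := by
    apply Matrix.inv_eq_right_inv
    have e1 : P * (Q * (Z * P)) = Z * P - P := by
      calc P * (Q * (Z * P)) = ((P * Q) * Z) * P := by simp only [Matrix.mul_assoc]
        _ = (Z - 1) * P := by rw [hzz']
        _ = Z * P - P := by rw [Matrix.sub_mul, Matrix.one_mul]
    rw [Matrix.sub_mul, Matrix.mul_add, Matrix.mul_add, Matrix.mul_one, Matrix.one_mul]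
    have e2 : Q * P * (Q * (Z * P)) = Q * (Z * P) - Q * P := by
      calc Q * P * (Q * (Z * P)) = Q * (P * (Q * (Z * P))) := by simp only [Matrix.mul_assoc]
        _ = Q * (Z * P - P) := by rw [e1]
        _ = Q * (Z * P) - Q * P := by rw [Matrix.mul_sub]
    rw [e2]
    simp only [Matrix.mul_one]
    abel
  refine ⟨hW, hwinv, ?_⟩
  intro w _ V
  rw [hwinv, Matrix.add_mul, Matrix.one_mul]
  have e3 : Q * (Z * P) * (Q * V) = Q * (Z * V) - Q * V := by
    calc Q * (Z * P) * (Q * V) = Q * ((Z * (P * Q)) * V) := by simp only [Matrix.mul_assoc]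
      _ = Q * ((Z - 1) * V) := by rw [hzz]
      _ = Q * (Z * V - V) := by rw [Matrix.sub_mul, Matrix.one_mul]
      _ = Q * (Z * V) - Q * V := by rw [Matrix.mul_sub]
  rw [e3]
  abel

end Stmt9Aux




namespace Stmt9Aux2

variable {m n p q : ℕ} {ι κ : Type*} [Fintype ι] [DecidableEq ι] [Fintype κ] [DecidableEq κ]

lemma fromBlocks_sub' {l o l' o' : Type*} (A : Matrix l l' ℂ) (B : Matrix l o' ℂ)
    (C : Matrix o l' ℂ) (D : Matrix o o' ℂ) (A' : Matrix l l' ℂ) (B' : Matrix l o' ℂ)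
    (C' : Matrix o l' ℂ) (D' : Matrix o o' ℂ) :
    fromBlocks A B C D - fromBlocks A' B' C' D'
      = fromBlocks (A - A') (B - B') (C - C') (D - D') := by
  ext (i | i) (j | j) <;> rfl

lemma step_lemma
    (Atil : Matrix (Fin m) (Fin m) ℂ) (Dtil : Matrix (Fin n) (Fin n) ℂ)
    (LB' : Matrix (Fin m) (Fin p) ℂ) (RB' : Matrix (Fin p) (Fin n) ℂ)
    (LC' : Matrix (Fin n) (Fin q) ℂ) (RC' : Matrix (Fin q) (Fin m) ℂ)
    (YA : Matrix (Fin q) (Fin p) ℂ) (YD : Matrix (Fin p) (Fin q) ℂ)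
    (E₀ : Matrix (Fin n) (Fin n) ℂ) (F₀ : Matrix (Fin m) (Fin m) ℂ)
    (G₀ : Matrix (Fin n) (Fin m) ℂ) (H₀ : Matrix (Fin m) (Fin n) ℂ)
    (hZ : IsUnit ((1 : Matrix (Fin p) (Fin p) ℂ) - YD * YA))
    (hH : H₀ = LB' * ((1 - YD * YA)⁻¹ * RB'))
    (hF : F₀ = Atil + LB' * ((1 - YD * YA)⁻¹ * (YD * RC')))
    (hG : G₀ = LC' * (RC' + YA * ((1 - YD * YA)⁻¹ * (YD * RC'))))
    (hE : E₀ = Dtil + LC' * (YA * ((1 - YD * YA)⁻¹ * RB')))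
    (U : Matrix (Fin m) ι ℂ) (V : Matrix ι (Fin n) ℂ)
    (Nb : Matrix ι κ ℂ) (Mb : Matrix κ ι ℂ)
    (Xs Xs1 : Matrix (Fin m) (Fin n) ℂ)
    (hKu : IsUnit ((1 : Matrix ι ι ℂ) - Nb * Mb))
    (hXs : Xs = U * (1 - Nb * Mb)⁻¹ * V)
    (hGXu : IsUnit ((1 : Matrix (Fin n) (Fin n) ℂ) - G₀ * Xs))
    (hX1 : Xs1 = H₀ + F₀ * Xs * (1 - G₀ * Xs)⁻¹ * E₀) :
    IsUnit ((1 : Matrix (Fin p ⊕ ι) (Fin p ⊕ ι) ℂ) -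
        fromBlocks YD 0 (V * LC') Nb * fromBlocks YA (RC' * U) 0 Mb) ∧
    Xs1 = fromCols LB' (Atil * U) *
      ((1 - fromBlocks YD 0 (V * LC') Nb * fromBlocks YA (RC' * U) 0 Mb)⁻¹ *
        fromRows RB' (V * Dtil)) := by
  set Z := ((1 : Matrix (Fin p) (Fin p) ℂ) - YD * YA)⁻¹ with hZdef
  set Ks := (1 : Matrix ι ι ℂ) - Nb * Mb with hKsdef
  set S := Ks - V * (G₀ * U) with hSdef
  have hZd : IsUnit ((1 : Matrix (Fin p) (Fin p) ℂ) - YD * YA).det :=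
    (Matrix.isUnit_iff_isUnit_det _).mp hZ
  have hKd : IsUnit Ks.det := (Matrix.isUnit_iff_isUnit_det _).mp hKu
  have hGXd : IsUnit ((1 : Matrix (Fin n) (Fin n) ℂ) - G₀ * Xs).det :=
    (Matrix.isUnit_iff_isUnit_det _).mp hGXu
  have hZ1 : ((1 : Matrix (Fin p) (Fin p) ℂ) - YD * YA) * Z = 1 :=
    Matrix.mul_nonsing_inv _ hZd
  -- S is a unit
  have hSdet : IsUnit S.det := by
    have hSfact : S = Ks * (1 - Ks⁻¹ * (V * (G₀ * U))) := by
      rw [Matrix.mul_sub, Matrix.mul_one, Matrix.mul_nonsing_inv_cancel_left _ _ hKd]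
    have h5 : (1 : Matrix ι ι ℂ) - Ks⁻¹ * (V * (G₀ * U)) = 1 - (Ks⁻¹ * V) * (G₀ * U) := by
      simp only [Matrix.mul_assoc]
    rw [hSfact, det_mul]
    refine hKd.mul ?_
    rw [h5, Matrix.det_one_sub_mul_comm]
    have hGU : (G₀ * U) * (Ks⁻¹ * V) = G₀ * Xs := by
      rw [hXs]; simp only [Matrix.mul_assoc]
    rw [hGU]
    exact hGXd
  -- push-through: Xs * (1 - G₀ Xs)⁻¹ = U * (S⁻¹ * V)
  have hpush : Xs * (1 - G₀ * Xs)⁻¹ = U * (S⁻¹ * V) := by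
    have expand : V * (1 - G₀ * Xs) = S * (Ks⁻¹ * V) := by
      rw [hXs, hSdef]
      simp only [Matrix.mul_sub, Matrix.sub_mul, Matrix.mul_one,
        Matrix.mul_nonsing_inv_cancel_left _ _ hKd, Matrix.mul_assoc]
    have key : U * (S⁻¹ * V) * (1 - G₀ * Xs) = Xs := by
      calc U * (S⁻¹ * V) * (1 - G₀ * Xs) = U * (S⁻¹ * (V * (1 - G₀ * Xs))) := by
            simp only [Matrix.mul_assoc]
        _ = U * (S⁻¹ * (S * (Ks⁻¹ * V))) := by rw [expand]
        _ = U * (Ks⁻¹ * V) := by rw [Matrix.nonsing_inv_mul_cancel_left _ _ hSdet]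
        _ = Xs := by rw [hXs]; simp only [Matrix.mul_assoc]
    calc Xs * (1 - G₀ * Xs)⁻¹ = U * (S⁻¹ * V) * (1 - G₀ * Xs) * (1 - G₀ * Xs)⁻¹ := by
          rw [key]
      _ = U * (S⁻¹ * V) := Matrix.mul_nonsing_inv_cancel_right _ _ hGXd
  -- the block matrix
  have hKblock : (1 : Matrix (Fin p ⊕ ι) (Fin p ⊕ ι) ℂ) -
      fromBlocks YD 0 (V * LC') Nb * fromBlocks YA (RC' * U) 0 Mb
      = fromBlocks (1 - YD * YA) (-(YD * (RC' * U))) (-(V * (LC' * YA)))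
          (Ks - V * (LC' * (RC' * U))) := by
    rw [fromBlocks_multiply, ← fromBlocks_one, fromBlocks_sub']
    rw [fromBlocks_inj]
    refine ⟨by simp, by simp, ?_, ?_⟩
    · simp only [Matrix.mul_zero, add_zero, zero_sub, Matrix.mul_assoc]
    · rw [hKsdef]
      have : V * LC' * (RC' * U) = V * (LC' * (RC' * U)) := by simp only [Matrix.mul_assoc]
      rw [this]
      abel
  set KB := fromBlocks ((1:Matrix (Fin p) (Fin p) ℂ) - YD * YA) (-(YD * (RC' * U)))
      (-(V * (LC' * YA))) (Ks - V * (LC' * (RC' * U))) with hKBdef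
  haveI : Invertible ((1 : Matrix (Fin p) (Fin p) ℂ) - YD * YA) :=
    Matrix.invertibleOfIsUnitDet _ hZd
  have hSchur : (Ks - V * (LC' * (RC' * U))) -
      (-(V * (LC' * YA))) * ⅟((1:Matrix (Fin p) (Fin p) ℂ) - YD * YA) * (-(YD * (RC' * U))) = S := by
    rw [Matrix.invOf_eq_nonsing_inv, hSdef, hG]
    simp only [Matrix.neg_mul, Matrix.mul_neg, neg_neg, Matrix.mul_add, Matrix.add_mul, Matrix.mul_assoc, sub_sub]
    rfl
  have hdet : KB.det = ((1:Matrix (Fin p) (Fin p) ℂ) - YD * YA).det * S.det := by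
    rw [hKBdef, det_fromBlocks₁₁, hSchur]
  have hKBu : IsUnit KB := by
    rw [Matrix.isUnit_iff_isUnit_det, hdet]
    exact hZd.mul hSdet
  have hKBd : IsUnit KB.det := (Matrix.isUnit_iff_isUnit_det _).mp hKBu
  refine ⟨by rw [hKblock]; exact hKBu, ?_⟩
  -- solve the linear system
  set y₂ := S⁻¹ * (V * E₀) with hy2
  set y₁ := Z * (RB' + YD * (RC' * (U * y₂))) with hy1
  have hKsy : Ks * y₂ = V * E₀ + V * (G₀ * (U * y₂)) := by
    have hKsS : Ks = S + V * (G₀ * U) := by rw [hSdef]; abel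
    rw [hKsS, Matrix.add_mul, hy2, Matrix.mul_nonsing_inv_cancel_left _ _ hSdet]
    simp only [Matrix.mul_assoc]
  have hsolve : KB * fromRows y₁ y₂ = fromRows RB' (V * Dtil) := by
    rw [hKBdef, fromBlocks_mul_fromRows, fromRows_inj.eq_iff]
    constructor
    · rw [hy1, ← Matrix.mul_assoc, hZ1, Matrix.one_mul]
      have h6 : -(YD * (RC' * U)) * y₂ = -(YD * (RC' * (U * y₂))) := by
        simp only [Matrix.neg_mul, Matrix.mul_assoc]
      rw [h6]; abel
    · have e1 : V * E₀ = V * Dtil + V * (LC' * (YA * (Z * RB'))) := by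
        rw [hE]; simp only [Matrix.mul_add, Matrix.mul_assoc]
      have g1 : V * (G₀ * (U * y₂)) = V * (LC' * (RC' * (U * y₂)))
          + V * (LC' * (YA * (Z * (YD * (RC' * (U * y₂)))))) := by
        rw [hG]; simp only [Matrix.add_mul, Matrix.mul_add, Matrix.mul_assoc]
      have c1 : -(V * (LC' * YA)) * y₁ = -(V * (LC' * (YA * (Z * RB'))))
          - V * (LC' * (YA * (Z * (YD * (RC' * (U * y₂)))))) := by
        rw [hy1]
        simp only [Matrix.neg_mul, Matrix.mul_add, Matrix.mul_assoc, neg_add]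
        abel
      have c2 : (Ks - V * (LC' * (RC' * U))) * y₂ = Ks * y₂ - V * (LC' * (RC' * (U * y₂))) := by
        rw [Matrix.sub_mul]; simp only [Matrix.mul_assoc]
      rw [c1, c2, hKsy, e1, g1]
      abel
  have hinvsol : KB⁻¹ * fromRows RB' (V * Dtil) = fromRows y₁ y₂ := by
    rw [← hsolve, Matrix.nonsing_inv_mul_cancel_left _ _ hKBd]
  rw [hKblock, hinvsol, fromCols_mul_fromRows, hX1]
  have hFX : F₀ * Xs * (1 - G₀ * Xs)⁻¹ * E₀ = F₀ * (U * y₂) := by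
    calc F₀ * Xs * (1 - G₀ * Xs)⁻¹ * E₀ = F₀ * (Xs * (1 - G₀ * Xs)⁻¹) * E₀ := by
          rw [Matrix.mul_assoc F₀]
      _ = F₀ * (U * (S⁻¹ * V)) * E₀ := by rw [hpush]
      _ = F₀ * (U * y₂) := by rw [hy2]; simp only [Matrix.mul_assoc]
  rw [hFX, hH, hF]
  have f1 : (Atil + LB' * (Z * (YD * RC'))) * (U * y₂)
      = Atil * (U * y₂) + LB' * (Z * (YD * (RC' * (U * y₂)))) := by
    simp only [Matrix.add_mul, Matrix.mul_assoc]
  have f2 : LB' * y₁ = LB' * (Z * RB') + LB' * (Z * (YD * (RC' * (U * y₂)))) := by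
    rw [hy1]; simp only [Matrix.mul_add]
  have f3 : (Atil * U) * y₂ = Atil * (U * y₂) := by simp only [Matrix.mul_assoc]
  rw [f1, f2, f3]
  abel

end Stmt9Aux2




namespace Stmt9Def

noncomputable section

variable {m n p q r : ℕ}

/-! ### Families of structured matrices -/

def UAm (Atil : Matrix (Fin m) (Fin m) ℂ) (LB' : Matrix (Fin m) (Fin p) ℂ) (s : ℕ) :
    Matrix (Fin m) (Fin s × Fin p) ℂ :=
  Matrix.of fun i x => (Atil ^ (x.1 : ℕ) * LB') i x.2

def VDm (RB' : Matrix (Fin p) (Fin n) ℂ) (Dtil : Matrix (Fin n) (Fin n) ℂ) (s : ℕ) :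
    Matrix (Fin s × Fin p) (Fin n) ℂ :=
  Matrix.of fun x j => (RB' * Dtil ^ (x.1 : ℕ)) x.2 j

def UDm (Dtil : Matrix (Fin n) (Fin n) ℂ) (LC' : Matrix (Fin n) (Fin q) ℂ) (s : ℕ) :
    Matrix (Fin n) (Fin s × Fin q) ℂ :=
  Matrix.of fun i x => (Dtil ^ (s - 1 - (x.1 : ℕ)) * LC') i x.2

def VAm (RC' : Matrix (Fin q) (Fin m) ℂ) (Atil : Matrix (Fin m) (Fin m) ℂ) (s : ℕ) :
    Matrix (Fin s × Fin q) (Fin m) ℂ :=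
  Matrix.of fun x j => (RC' * Atil ^ (s - 1 - (x.1 : ℕ))) x.2 j

def TAm (YA : Matrix (Fin q) (Fin p) ℂ) (RC' : Matrix (Fin q) (Fin m) ℂ)
    (Atil : Matrix (Fin m) (Fin m) ℂ) (LB' : Matrix (Fin m) (Fin p) ℂ) (s : ℕ) :
    Matrix (Fin s × Fin q) (Fin s × Fin p) ℂ :=
  Matrix.of fun x y =>
    if x.1 = y.1 then YA x.2 y.2
    else if x.1 < y.1 then (RC' * Atil ^ ((y.1 : ℕ) - (x.1 : ℕ) - 1) * LB') x.2 y.2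
    else 0

def TDm (YD : Matrix (Fin p) (Fin q) ℂ) (RB' : Matrix (Fin p) (Fin n) ℂ)
    (Dtil : Matrix (Fin n) (Fin n) ℂ) (LC' : Matrix (Fin n) (Fin q) ℂ) (s : ℕ) :
    Matrix (Fin s × Fin p) (Fin s × Fin q) ℂ :=
  Matrix.of fun x y =>
    if x.1 = y.1 then YD x.2 y.2
    else if y.1 < x.1 then (RB' * Dtil ^ ((x.1 : ℕ) - (y.1 : ℕ) - 1) * LC') x.2 y.2
    else 0

def Ublk (Atil : Matrix (Fin m) (Fin m) ℂ) (LB' : Matrix (Fin m) (Fin p) ℂ)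
    (ΓA : Matrix (Fin m) (Fin r) ℂ) (s : ℕ) : Matrix (Fin m) (Fin s × Fin p ⊕ Fin r) ℂ :=
  fromCols (UAm Atil LB' s) (Atil ^ s * ΓA)

def Vblk (RB' : Matrix (Fin p) (Fin n) ℂ) (Dtil : Matrix (Fin n) (Fin n) ℂ)
    (ΓD : Matrix (Fin r) (Fin n) ℂ) (s : ℕ) : Matrix (Fin s × Fin p ⊕ Fin r) (Fin n) ℂ :=
  fromRows (VDm RB' Dtil s) (ΓD * Dtil ^ s)

def Nblk (YD : Matrix (Fin p) (Fin q) ℂ) (RB' : Matrix (Fin p) (Fin n) ℂ)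
    (Dtil : Matrix (Fin n) (Fin n) ℂ) (LC' : Matrix (Fin n) (Fin q) ℂ)
    (ΓD : Matrix (Fin r) (Fin n) ℂ) (s : ℕ) :
    Matrix (Fin s × Fin p ⊕ Fin r) (Fin s × Fin q) ℂ :=
  fromRows (TDm YD RB' Dtil LC' s) (ΓD * UDm Dtil LC' s)

def Mblk (YA : Matrix (Fin q) (Fin p) ℂ) (RC' : Matrix (Fin q) (Fin m) ℂ)
    (Atil : Matrix (Fin m) (Fin m) ℂ) (LB' : Matrix (Fin m) (Fin p) ℂ)
    (ΓA : Matrix (Fin m) (Fin r) ℂ) (s : ℕ) :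
    Matrix (Fin s × Fin q) (Fin s × Fin p ⊕ Fin r) ℂ :=
  fromCols (TAm YA RC' Atil LB' s) (VAm RC' Atil s * ΓA)

/-! ### Index equivalences -/

def pSucc (s k : ℕ) : Fin (s + 1) × Fin k ≃ Fin k ⊕ Fin s × Fin k where
  toFun x := Fin.cases (Sum.inl x.2) (fun i => Sum.inr (i, x.2)) x.1
  invFun y := y.elim (fun c => (0, c)) fun ic => (ic.1.succ, ic.2)
  left_inv := by rintro ⟨i, c⟩; induction i using Fin.cases <;> simp
  right_inv := by rintro (c | ⟨i, c⟩) <;> simp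

@[simp] lemma pSucc_zero (s k : ℕ) (c : Fin k) : pSucc s k (0, c) = Sum.inl c := by
  simp [pSucc]

@[simp] lemma pSucc_succ (s k : ℕ) (i : Fin s) (c : Fin k) :
    pSucc s k (i.succ, c) = Sum.inr (i, c) := by simp [pSucc]

def eSucc (s k r : ℕ) : (Fin (s + 1) × Fin k) ⊕ Fin r ≃ Fin k ⊕ ((Fin s × Fin k) ⊕ Fin r) :=
  ((pSucc s k).sumCongr (Equiv.refl (Fin r))).trans (Equiv.sumAssoc _ _ _)

@[simp] lemma eSucc_inl_zero (s k r : ℕ) (c : Fin k) :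
    eSucc s k r (Sum.inl (0, c)) = Sum.inl c := by simp [eSucc]

@[simp] lemma eSucc_inl_succ (s k r : ℕ) (i : Fin s) (c : Fin k) :
    eSucc s k r (Sum.inl (i.succ, c)) = Sum.inr (Sum.inl (i, c)) := by simp [eSucc]

@[simp] lemma eSucc_inr (s k r : ℕ) (g : Fin r) :
    eSucc s k r (Sum.inr g) = Sum.inr (Sum.inr g) := by simp [eSucc]

/-! ### entry lemmas for products -/

lemma mul_UAm {w : Type*} (B : Matrix w (Fin m) ℂ)
    (Atil : Matrix (Fin m) (Fin m) ℂ) (LB' : Matrix (Fin m) (Fin p) ℂ) (s : ℕ) :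
    B * UAm Atil LB' s = Matrix.of fun i (x : Fin s × Fin p) => (B * (Atil ^ (x.1 : ℕ) * LB')) i x.2 := by
  ext i x
  simp [UAm, Matrix.mul_apply, Matrix.mul_assoc]

lemma VDm_mul {w : Type*} [Fintype w] [DecidableEq w] (RB' : Matrix (Fin p) (Fin n) ℂ)
    (Dtil : Matrix (Fin n) (Fin n) ℂ) (s : ℕ) (C : Matrix (Fin n) w ℂ) :
    VDm RB' Dtil s * C = Matrix.of fun (x : Fin s × Fin p) j => (RB' * Dtil ^ (x.1 : ℕ) * C) x.2 j := by
  ext x j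
  simp [VDm, Matrix.mul_apply]

lemma mul_UDm (ΓD : Matrix (Fin r) (Fin n) ℂ) (Dtil : Matrix (Fin n) (Fin n) ℂ)
    (LC' : Matrix (Fin n) (Fin q) ℂ) (s : ℕ) :
    ΓD * UDm Dtil LC' s
      = Matrix.of fun g (x : Fin s × Fin q) => (ΓD * (Dtil ^ (s - 1 - (x.1 : ℕ)) * LC')) g x.2 := by
  ext g x
  simp [UDm, Matrix.mul_apply, Matrix.mul_assoc]

lemma VAm_mul (RC' : Matrix (Fin q) (Fin m) ℂ) (Atil : Matrix (Fin m) (Fin m) ℂ)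
    (ΓA : Matrix (Fin m) (Fin r) ℂ) (s : ℕ) :
    VAm RC' Atil s * ΓA
      = Matrix.of fun (x : Fin s × Fin q) g => (RC' * Atil ^ (s - 1 - (x.1 : ℕ)) * ΓA) x.2 g := by
  ext x g
  simp [VAm, Matrix.mul_apply]

/-! ### decomposition lemmas -/

lemma Ublk_succ (Atil : Matrix (Fin m) (Fin m) ℂ) (LB' : Matrix (Fin m) (Fin p) ℂ)
    (ΓA : Matrix (Fin m) (Fin r) ℂ) (s : ℕ) :
    Ublk Atil LB' ΓA (s + 1)
      = (fromCols LB' (Atil * Ublk Atil LB' ΓA s)).submatrix id (eSucc s p r) := by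
  have h1 : Atil * Ublk Atil LB' ΓA s
      = fromCols (Atil * UAm Atil LB' s) (Atil * (Atil ^ s * ΓA)) := by
    rw [Ublk, mul_fromCols]
  rw [h1, mul_UAm]
  ext i z
  rcases z with ⟨a, x⟩ | g
  · induction a using Fin.cases with
    | zero => simp [Ublk, UAm]
    | succ j =>
      simp [Ublk, UAm, Fin.val_succ, pow_succ', Matrix.mul_assoc]
  · simp [Ublk, pow_succ', Matrix.mul_assoc]

lemma Vblk_succ (RB' : Matrix (Fin p) (Fin n) ℂ) (Dtil : Matrix (Fin n) (Fin n) ℂ)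
    (ΓD : Matrix (Fin r) (Fin n) ℂ) (s : ℕ) :
    Vblk RB' Dtil ΓD (s + 1)
      = (fromRows RB' (Vblk RB' Dtil ΓD s * Dtil)).submatrix (eSucc s p r) id := by
  have h1 : Vblk RB' Dtil ΓD s * Dtil
      = fromRows (VDm RB' Dtil s * Dtil) (ΓD * Dtil ^ s * Dtil) := by
    rw [Vblk, fromRows_mul]
  rw [h1, VDm_mul]
  ext z j
  rcases z with ⟨a, x⟩ | g
  · induction a using Fin.cases with
    | zero => simp [Vblk, VDm]
    | succ i =>
      simp [Vblk, VDm, Fin.val_succ, pow_succ, Matrix.mul_assoc]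
  · simp [Vblk, pow_succ, Matrix.mul_assoc]


lemma Nblk_succ (YD : Matrix (Fin p) (Fin q) ℂ) (RB' : Matrix (Fin p) (Fin n) ℂ)
    (Dtil : Matrix (Fin n) (Fin n) ℂ) (LC' : Matrix (Fin n) (Fin q) ℂ)
    (ΓD : Matrix (Fin r) (Fin n) ℂ) (s : ℕ) :
    Nblk YD RB' Dtil LC' ΓD (s + 1)
      = (fromBlocks YD 0 (Vblk RB' Dtil ΓD s * LC') (Nblk YD RB' Dtil LC' ΓD s)).submatrix
          (eSucc s p r) (pSucc s q) := by
  simp only [Nblk, mul_UDm, Vblk, fromRows_mul, VDm_mul]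
  ext z w
  obtain ⟨b, y⟩ := w
  rcases z with ⟨a, x⟩ | g
  · induction a using Fin.cases with
    | zero =>
      induction b using Fin.cases with
      | zero => simp [TDm]
      | succ j =>
        simp [TDm, Fin.succ_ne_zero, eq_comm (a := (0 : Fin (s+1)))]
    | succ i =>
      induction b using Fin.cases with
      | zero =>
        simp [TDm, Fin.succ_ne_zero, Fin.succ_pos, Fin.val_succ]
      | succ j =>
        simp [TDm, Fin.succ_inj, Fin.succ_lt_succ_iff, Fin.val_succ, Nat.succ_sub_succ]
  · induction b using Fin.cases with
    | zero => simp [Matrix.mul_assoc]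
    | succ j =>
      have e : s - ((j : ℕ) + 1) = s - 1 - (j : ℕ) := by omega
      simp [e, Fin.val_succ, Matrix.mul_assoc]

lemma Mblk_succ (YA : Matrix (Fin q) (Fin p) ℂ) (RC' : Matrix (Fin q) (Fin m) ℂ)
    (Atil : Matrix (Fin m) (Fin m) ℂ) (LB' : Matrix (Fin m) (Fin p) ℂ)
    (ΓA : Matrix (Fin m) (Fin r) ℂ) (s : ℕ) :
    Mblk YA RC' Atil LB' ΓA (s + 1)
      = (fromBlocks YA (RC' * Ublk Atil LB' ΓA s) 0 (Mblk YA RC' Atil LB' ΓA s)).submatrix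
          (pSucc s q) (eSucc s p r) := by
  have h1 : RC' * Ublk Atil LB' ΓA s
      = fromCols (RC' * UAm Atil LB' s) (RC' * (Atil ^ s * ΓA)) := by
    rw [Ublk, mul_fromCols]
  simp only [Mblk, VAm_mul, h1, mul_UAm]
  ext w z
  obtain ⟨a, x⟩ := w
  rcases z with ⟨b, y⟩ | g
  · induction a using Fin.cases with
    | zero =>
      induction b using Fin.cases with
      | zero => simp [TAm]
      | succ j =>
        simp [TAm, Fin.succ_ne_zero, eq_comm (a := (0 : Fin (s+1))), Fin.succ_pos,
          Fin.val_succ, Matrix.mul_assoc]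
    | succ i =>
      induction b using Fin.cases with
      | zero =>
        simp [TAm, Fin.succ_ne_zero, Fin.val_succ]
      | succ j =>
        simp [TAm, Fin.succ_inj, Fin.succ_lt_succ_iff, Fin.val_succ, Nat.succ_sub_succ]
  · induction a using Fin.cases with
    | zero =>
      have e : s + 1 - 1 - (((0 : Fin (s+1))) : ℕ) = s := by simp
      simp [e, Matrix.mul_assoc]
    | succ i =>
      have e : s - ((i : ℕ) + 1) = s - 1 - (i : ℕ) := by omega
      simp [e, Fin.val_succ, Matrix.mul_assoc]

end

end Stmt9Def

namespace Stmt9Def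

noncomputable section

variable {m n p q r : ℕ}

lemma key_induction
    (Atil : Matrix (Fin m) (Fin m) ℂ) (Dtil : Matrix (Fin n) (Fin n) ℂ)
    (LB' : Matrix (Fin m) (Fin p) ℂ) (RB' : Matrix (Fin p) (Fin n) ℂ)
    (LC' : Matrix (Fin n) (Fin q) ℂ) (RC' : Matrix (Fin q) (Fin m) ℂ)
    (YA : Matrix (Fin q) (Fin p) ℂ) (YD : Matrix (Fin p) (Fin q) ℂ)
    (E₀ : Matrix (Fin n) (Fin n) ℂ) (F₀ : Matrix (Fin m) (Fin m) ℂ)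
    (G₀ : Matrix (Fin n) (Fin m) ℂ) (H₀ : Matrix (Fin m) (Fin n) ℂ)
    (hZ : IsUnit ((1 : Matrix (Fin p) (Fin p) ℂ) - YD * YA))
    (hH : H₀ = LB' * ((1 - YD * YA)⁻¹ * RB'))
    (hF : F₀ = Atil + LB' * ((1 - YD * YA)⁻¹ * (YD * RC')))
    (hG : G₀ = LC' * (RC' + YA * ((1 - YD * YA)⁻¹ * (YD * RC'))))
    (hE : E₀ = Dtil + LC' * (YA * ((1 - YD * YA)⁻¹ * RB')))
    (ΓA : Matrix (Fin m) (Fin r) ℂ) (ΓD : Matrix (Fin r) (Fin n) ℂ)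
    (t : ℕ) (X : ℕ → Matrix (Fin m) (Fin n) ℂ) (hX0 : X 0 = ΓA * ΓD)
    (hstep : ∀ s < t, IsUnit ((1 : Matrix (Fin n) (Fin n) ℂ) - G₀ * X s) ∧
      X (s + 1) = H₀ + F₀ * X s * (1 - G₀ * X s)⁻¹ * E₀) :
    ∀ s, s ≤ t →
      IsUnit ((1 : Matrix (Fin s × Fin p ⊕ Fin r) (Fin s × Fin p ⊕ Fin r) ℂ)
          - Nblk YD RB' Dtil LC' ΓD s * Mblk YA RC' Atil LB' ΓA s) ∧
      X s = Ublk Atil LB' ΓA s *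
          ((1 : Matrix (Fin s × Fin p ⊕ Fin r) (Fin s × Fin p ⊕ Fin r) ℂ)
            - Nblk YD RB' Dtil LC' ΓD s * Mblk YA RC' Atil LB' ΓA s)⁻¹ *
          Vblk RB' Dtil ΓD s := by
  intro s
  induction s with
  | zero =>
    intro _
    have hNM : Nblk YD RB' Dtil LC' ΓD 0 * Mblk YA RC' Atil LB' ΓA 0 = 0 := by
      ext z w
      simp [Matrix.mul_apply]
    rw [hNM, sub_zero]
    refine ⟨isUnit_one, ?_⟩
    rw [inv_one, Matrix.mul_one, hX0, Ublk, Vblk, fromCols_mul_fromRows]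
    have h0 : UAm Atil LB' 0 * VDm RB' Dtil 0 = 0 := by
      ext i j
      simp [Matrix.mul_apply]
    rw [h0, zero_add, pow_zero, pow_zero, Matrix.one_mul, Matrix.mul_one]
  | succ s ih =>
    intro hle
    have hs : s < t := hle
    obtain ⟨hKu, hXrep⟩ := ih (Nat.le_of_succ_le hle)
    obtain ⟨hGXu, hXstep⟩ := hstep s hs
    obtain ⟨hBu, hBrep⟩ := Stmt9Aux2.step_lemma Atil Dtil LB' RB' LC' RC' YA YD E₀ F₀ G₀ H₀
      hZ hH hF hG hE (Ublk Atil LB' ΓA s) (Vblk RB' Dtil ΓD s)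
      (Nblk YD RB' Dtil LC' ΓD s) (Mblk YA RC' Atil LB' ΓA s)
      (X s) (X (s + 1)) hKu hXrep hGXu hXstep
    have hsub : (1 : Matrix (Fin (s+1) × Fin p ⊕ Fin r) (Fin (s+1) × Fin p ⊕ Fin r) ℂ)
        - Nblk YD RB' Dtil LC' ΓD (s+1) * Mblk YA RC' Atil LB' ΓA (s+1)
        = ((1 : Matrix (Fin p ⊕ (Fin s × Fin p ⊕ Fin r)) (Fin p ⊕ (Fin s × Fin p ⊕ Fin r)) ℂ)
            - fromBlocks YD 0 (Vblk RB' Dtil ΓD s * LC') (Nblk YD RB' Dtil LC' ΓD s) *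
              fromBlocks YA (RC' * Ublk Atil LB' ΓA s) 0 (Mblk YA RC' Atil LB' ΓA s)).submatrix
            (eSucc s p r) (eSucc s p r) := by
      rw [Nblk_succ, Mblk_succ, submatrix_mul_equiv]
      simp [Matrix.submatrix_sub]
    constructor
    · rw [hsub, isUnit_submatrix_equiv]
      exact hBu
    · rw [hsub, Matrix.inv_submatrix_equiv, Ublk_succ, Vblk_succ, submatrix_mul_equiv,
        submatrix_mul_equiv, Matrix.submatrix_id_id, hBrep, Matrix.mul_assoc]

end

end Stmt9Def

/-- Toeplitz-structured closed form of the fixed-point iterates with an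
arbitrary low-rank initial value `X₀ = Γ^A Γ^D`. -/
theorem fixedpoint_toeplitz_closed_form_arbitrary_initial {m n p q r : ℕ}
    (hm : 0 < m) (hn : 0 < n) (hp : 0 < p) (hq : 0 < q) (hr : 0 < r)
    (A : Matrix (Fin m) (Fin m) ℂ) (D : Matrix (Fin n) (Fin n) ℂ)
    (LB : Matrix (Fin m) (Fin p) ℂ) (RB : Matrix (Fin p) (Fin n) ℂ)
    (LC : Matrix (Fin n) (Fin q) ℂ) (RC : Matrix (Fin q) (Fin m) ℂ)
    (α β : ℂ) (hαβ : α + β ≠ 0)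
    (hDα : IsUnit (α • (1 : Matrix (Fin n) (Fin n) ℂ) + D))
    (hAβ : IsUnit (β • (1 : Matrix (Fin m) (Fin m) ℂ) + A))
    (hS : IsUnit ((β • 1 + A) - (LB * RB) * (α • 1 + D)⁻¹ * (LC * RC)))
    (E₀ : Matrix (Fin n) (Fin n) ℂ) (F₀ : Matrix (Fin m) (Fin m) ℂ)
    (G₀ : Matrix (Fin n) (Fin m) ℂ) (H₀ : Matrix (Fin m) (Fin n) ℂ)
    (hE : E₀ = -((((α • 1 + D) - (LC * RC) * (β • 1 + A)⁻¹ * (LB * RB))⁻¹) *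
      (((-β) • 1 + D) - (LC * RC) * (β • 1 + A)⁻¹ * (LB * RB))))
    (hF : F₀ = -((((β • 1 + A) - (LB * RB) * (α • 1 + D)⁻¹ * (LC * RC))⁻¹) *
      (((-α) • 1 + A) - (LB * RB) * (α • 1 + D)⁻¹ * (LC * RC))))
    (hG : G₀ = (α + β) • ((((α • 1 + D) - (LC * RC) * (β • 1 + A)⁻¹ * (LB * RB))⁻¹) *
      (LC * RC) * (β • 1 + A)⁻¹))
    (hH : H₀ = (α + β) • ((((β • 1 + A) - (LB * RB) * (α • 1 + D)⁻¹ * (LC * RC))⁻¹) *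
      (LB * RB) * (α • 1 + D)⁻¹))
    (Atil : Matrix (Fin m) (Fin m) ℂ) (hAtil : Atil = -((β • 1 + A)⁻¹ * ((-α) • 1 + A)))
    (Dtil : Matrix (Fin n) (Fin n) ℂ) (hDtil : Dtil = -((α • 1 + D)⁻¹ * ((-β) • 1 + D)))
    (LB' : Matrix (Fin m) (Fin p) ℂ) (hLB' : LB' = (β • 1 + A)⁻¹ * LB)
    (RC' : Matrix (Fin q) (Fin m) ℂ) (hRC' : RC' = (α + β) • (RC * (β • 1 + A)⁻¹))
    (YA : Matrix (Fin q) (Fin p) ℂ) (hYA : YA = RC * (β • 1 + A)⁻¹ * LB)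
    (LC' : Matrix (Fin n) (Fin q) ℂ) (hLC' : LC' = (α • 1 + D)⁻¹ * LC)
    (RB' : Matrix (Fin p) (Fin n) ℂ) (hRB' : RB' = (α + β) • (RB * (α • 1 + D)⁻¹))
    (YD : Matrix (Fin p) (Fin q) ℂ) (hYD : YD = RB * (α • 1 + D)⁻¹ * LC)
    (t : ℕ) (ht : 0 < t)
    (ΓA : Matrix (Fin m) (Fin r) ℂ) (ΓD : Matrix (Fin r) (Fin n) ℂ)
    (X : ℕ → Matrix (Fin m) (Fin n) ℂ) (hX0 : X 0 = ΓA * ΓD)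
    (hstep : ∀ s < t, IsUnit (1 - G₀ * X s) ∧
      X (s + 1) = H₀ + F₀ * X s * (1 - G₀ * X s)⁻¹ * E₀)
    (UA : Matrix (Fin m) (Fin t × Fin p) ℂ)
    (hUA : UA = Matrix.of fun i x => (Atil ^ (x.1 : ℕ) * LB') i x.2)
    (VD : Matrix (Fin t × Fin p) (Fin n) ℂ)
    (hVD : VD = Matrix.of fun x j => (RB' * Dtil ^ (x.1 : ℕ)) x.2 j)
    (UD : Matrix (Fin n) (Fin t × Fin q) ℂ)
    (hUD : UD = Matrix.of fun i x => (Dtil ^ (t - 1 - (x.1 : ℕ)) * LC') i x.2)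
    (VA : Matrix (Fin t × Fin q) (Fin m) ℂ)
    (hVA : VA = Matrix.of fun x j => (RC' * Atil ^ (t - 1 - (x.1 : ℕ))) x.2 j)
    (TA : Matrix (Fin t × Fin q) (Fin t × Fin p) ℂ)
    (hTA : TA = Matrix.of fun x y =>
      if x.1 = y.1 then YA x.2 y.2
      else if x.1 < y.1 then (RC' * Atil ^ ((y.1 : ℕ) - (x.1 : ℕ) - 1) * LB') x.2 y.2
      else 0)
    (TD : Matrix (Fin t × Fin p) (Fin t × Fin q) ℂ)
    (hTD : TD = Matrix.of fun x y =>
      if x.1 = y.1 then YD x.2 y.2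
      else if y.1 < x.1 then (RB' * Dtil ^ ((x.1 : ℕ) - (y.1 : ℕ) - 1) * LC') x.2 y.2
      else 0) :
    IsUnit ((1 : Matrix ((Fin t × Fin p) ⊕ Fin r) ((Fin t × Fin p) ⊕ Fin r) ℂ) -
        fromRows TD (ΓD * UD) * fromCols TA (VA * ΓA)) ∧
      X t = fromCols UA (Atil ^ t * ΓA) *
        ((1 : Matrix ((Fin t × Fin p) ⊕ Fin r) ((Fin t × Fin p) ⊕ Fin r) ℂ) -
          fromRows TD (ΓD * UD) * fromCols TA (VA * ΓA))⁻¹ *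
        fromRows VD (ΓD * Dtil ^ t) := by
  subst hUA hVD hUD hVA hTA hTD hAtil hDtil hLB' hRC' hYA hLC' hRB' hYD
  have hAd : IsUnit (β • (1 : Matrix (Fin m) (Fin m) ℂ) + A).det := (Matrix.isUnit_iff_isUnit_det _).mp hAβ
  have hDd : IsUnit (α • (1 : Matrix (Fin n) (Fin n) ℂ) + D).det := (Matrix.isUnit_iff_isUnit_det _).mp hDα
  have hgrpA : (β • (1 : Matrix (Fin m) (Fin m) ℂ) + A) - (LB * RB) * (α • (1 : Matrix (Fin n) (Fin n) ℂ) + D)⁻¹ * (LC * RC)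
      = (β • (1 : Matrix (Fin m) (Fin m) ℂ) + A) - LB * (RB * (α • (1 : Matrix (Fin n) (Fin n) ℂ) + D)⁻¹ * LC) * RC := by simp only [Matrix.mul_assoc]
  have hgrpD : (α • (1 : Matrix (Fin n) (Fin n) ℂ) + D) - (LC * RC) * (β • (1 : Matrix (Fin m) (Fin m) ℂ) + A)⁻¹ * (LB * RB)
      = (α • (1 : Matrix (Fin n) (Fin n) ℂ) + D) - LC * (RC * (β • (1 : Matrix (Fin m) (Fin m) ℂ) + A)⁻¹ * LB) * RB := by simp only [Matrix.mul_assoc]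
  have hSAu : IsUnit ((β • (1 : Matrix (Fin m) (Fin m) ℂ) + A) - LB * (RB * (α • (1 : Matrix (Fin n) (Fin n) ℂ) + D)⁻¹ * LC) * RC) := by rw [← hgrpA]; exact hS
  have hSAd : IsUnit ((β • (1 : Matrix (Fin m) (Fin m) ℂ) + A) - LB * (RB * (α • (1 : Matrix (Fin n) (Fin n) ℂ) + D)⁻¹ * LC) * RC).det := (Matrix.isUnit_iff_isUnit_det _).mp hSAu
  have hZd : IsUnit ((1 : Matrix (Fin p) (Fin p) ℂ) - (RB * (α • (1 : Matrix (Fin n) (Fin n) ℂ) + D)⁻¹ * LC) * (RC * (β • (1 : Matrix (Fin m) (Fin m) ℂ) + A)⁻¹ * LB)).det := by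
    rw [Stmt9Aux.wood_det (β • (1 : Matrix (Fin m) (Fin m) ℂ) + A) (α • (1 : Matrix (Fin n) (Fin n) ℂ) + D) LB RB LC RC hAd] at hSAd
    exact (IsUnit.mul_iff.mp hSAd).2
  have hZu : IsUnit ((1 : Matrix (Fin p) (Fin p) ℂ) - (RB * (α • (1 : Matrix (Fin n) (Fin n) ℂ) + D)⁻¹ * LC) * (RC * (β • (1 : Matrix (Fin m) (Fin m) ℂ) + A)⁻¹ * LB)) := (Matrix.isUnit_iff_isUnit_det _).mpr hZd
  obtain ⟨hWu, hWinv, hWpush⟩ := Stmt9Aux.push_inv (RB * (α • (1 : Matrix (Fin n) (Fin n) ℂ) + D)⁻¹ * LC) (RC * (β • (1 : Matrix (Fin m) (Fin m) ℂ) + A)⁻¹ * LB) hZu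
  have hWd : IsUnit ((1 : Matrix (Fin q) (Fin q) ℂ) - (RC * (β • (1 : Matrix (Fin m) (Fin m) ℂ) + A)⁻¹ * LB) * (RB * (α • (1 : Matrix (Fin n) (Fin n) ℂ) + D)⁻¹ * LC)).det :=
    (Matrix.isUnit_iff_isUnit_det _).mp hWu
  have hSDd : IsUnit ((α • (1 : Matrix (Fin n) (Fin n) ℂ) + D) - LC * (RC * (β • (1 : Matrix (Fin m) (Fin m) ℂ) + A)⁻¹ * LB) * RB).det := by
    rw [Stmt9Aux.wood_det (α • (1 : Matrix (Fin n) (Fin n) ℂ) + D) (β • (1 : Matrix (Fin m) (Fin m) ℂ) + A) LC RC LB RB hDd]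
    exact hDd.mul hWd
  have hshA : ((-α) • (1 : Matrix (Fin m) (Fin m) ℂ) + A) = (β • (1 : Matrix (Fin m) (Fin m) ℂ) + A) - (α + β) • 1 := by
    have h : (-α : ℂ) = β - (α + β) := by ring
    rw [h, sub_smul]; abel
  have hshD : ((-β) • (1 : Matrix (Fin n) (Fin n) ℂ) + D) = (α • (1 : Matrix (Fin n) (Fin n) ℂ) + D) - (α + β) • 1 := by
    have h : (-β : ℂ) = α - (α + β) := by ring
    rw [h, sub_smul]; abel
  have hAtil' : -((β • (1 : Matrix (Fin m) (Fin m) ℂ) + A)⁻¹ * ((-α) • 1 + A)) = (α + β) • (β • (1 : Matrix (Fin m) (Fin m) ℂ) + A)⁻¹ - 1 := by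
    rw [hshA, Matrix.mul_sub, Matrix.mul_smul, Matrix.nonsing_inv_mul _ hAd,
      Matrix.mul_one, neg_sub]
  have hDtil' : -((α • (1 : Matrix (Fin n) (Fin n) ℂ) + D)⁻¹ * ((-β) • 1 + D)) = (α + β) • (α • (1 : Matrix (Fin n) (Fin n) ℂ) + D)⁻¹ - 1 := by
    rw [hshD, Matrix.mul_sub, Matrix.mul_smul, Matrix.nonsing_inv_mul _ hDd,
      Matrix.mul_one, neg_sub]
  have hH' : H₀ = ((β • (1 : Matrix (Fin m) (Fin m) ℂ) + A)⁻¹ * LB) * (((1 : Matrix (Fin p) (Fin p) ℂ) - (RB * (α • (1 : Matrix (Fin n) (Fin n) ℂ) + D)⁻¹ * LC) * (RC * (β • (1 : Matrix (Fin m) (Fin m) ℂ) + A)⁻¹ * LB))⁻¹ * ((α + β) • (RB * (α • (1 : Matrix (Fin n) (Fin n) ℂ) + D)⁻¹))) := by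
    rw [hH, hgrpA, Stmt9Aux.wood_solve (β • (1 : Matrix (Fin m) (Fin m) ℂ) + A) (α • (1 : Matrix (Fin n) (Fin n) ℂ) + D) LB RB LC RC hAd hZu]
    simp only [Matrix.mul_smul, Matrix.mul_assoc]
  have hgrpA2 : ((-α) • (1 : Matrix (Fin m) (Fin m) ℂ) + A) - (LB * RB) * (α • (1 : Matrix (Fin n) (Fin n) ℂ) + D)⁻¹ * (LC * RC)
      = ((β • (1 : Matrix (Fin m) (Fin m) ℂ) + A) - LB * (RB * (α • (1 : Matrix (Fin n) (Fin n) ℂ) + D)⁻¹ * LC) * RC) - (α + β) • 1 := by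
    rw [hshA]; simp only [Matrix.mul_assoc]; abel
  have hF1 : F₀ = (α + β) • ((β • (1 : Matrix (Fin m) (Fin m) ℂ) + A) - LB * (RB * (α • (1 : Matrix (Fin n) (Fin n) ℂ) + D)⁻¹ * LC) * RC)⁻¹ - 1 := by
    rw [hF, hgrpA, hgrpA2, Matrix.mul_sub, Matrix.nonsing_inv_mul _ hSAd,
      Matrix.mul_smul, Matrix.mul_one, neg_sub]
  have hF' : F₀ = -((β • (1 : Matrix (Fin m) (Fin m) ℂ) + A)⁻¹ * ((-α) • 1 + A))
      + ((β • (1 : Matrix (Fin m) (Fin m) ℂ) + A)⁻¹ * LB) * (((1 : Matrix (Fin p) (Fin p) ℂ) - (RB * (α • (1 : Matrix (Fin n) (Fin n) ℂ) + D)⁻¹ * LC) * (RC * (β • (1 : Matrix (Fin m) (Fin m) ℂ) + A)⁻¹ * LB))⁻¹ * ((RB * (α • (1 : Matrix (Fin n) (Fin n) ℂ) + D)⁻¹ * LC) * ((α + β) • (RC * (β • (1 : Matrix (Fin m) (Fin m) ℂ) + A)⁻¹)))) := by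
    rw [hF1, Stmt9Aux.wood_inv (β • (1 : Matrix (Fin m) (Fin m) ℂ) + A) (α • (1 : Matrix (Fin n) (Fin n) ℂ) + D) LB RB LC RC hAd hZu, hAtil']
    simp only [smul_add, Matrix.mul_smul, Matrix.mul_assoc]
    abel
  have hG' : G₀ = ((α • (1 : Matrix (Fin n) (Fin n) ℂ) + D)⁻¹ * LC) * (((α + β) • (RC * (β • (1 : Matrix (Fin m) (Fin m) ℂ) + A)⁻¹))
      + (RC * (β • (1 : Matrix (Fin m) (Fin m) ℂ) + A)⁻¹ * LB) * (((1 : Matrix (Fin p) (Fin p) ℂ) - (RB * (α • (1 : Matrix (Fin n) (Fin n) ℂ) + D)⁻¹ * LC) * (RC * (β • (1 : Matrix (Fin m) (Fin m) ℂ) + A)⁻¹ * LB))⁻¹ * ((RB * (α • (1 : Matrix (Fin n) (Fin n) ℂ) + D)⁻¹ * LC) * ((α + β) • (RC * (β • (1 : Matrix (Fin m) (Fin m) ℂ) + A)⁻¹))))) := by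
    rw [hG, hgrpD, Stmt9Aux.wood_solve (α • (1 : Matrix (Fin n) (Fin n) ℂ) + D) (β • (1 : Matrix (Fin m) (Fin m) ℂ) + A) LC RC LB RB hDd hWu, hWinv]
    simp only [Matrix.add_mul, Matrix.mul_add, Matrix.one_mul, Matrix.mul_smul, smul_add,
      Matrix.mul_assoc]
  have hgrpD2 : ((-β) • (1 : Matrix (Fin n) (Fin n) ℂ) + D) - (LC * RC) * (β • (1 : Matrix (Fin m) (Fin m) ℂ) + A)⁻¹ * (LB * RB)
      = ((α • (1 : Matrix (Fin n) (Fin n) ℂ) + D) - LC * (RC * (β • (1 : Matrix (Fin m) (Fin m) ℂ) + A)⁻¹ * LB) * RB) - (α + β) • 1 := by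
    rw [hshD]; simp only [Matrix.mul_assoc]; abel
  have hE1 : E₀ = (α + β) • ((α • (1 : Matrix (Fin n) (Fin n) ℂ) + D) - LC * (RC * (β • (1 : Matrix (Fin m) (Fin m) ℂ) + A)⁻¹ * LB) * RB)⁻¹ - 1 := by
    rw [hE, hgrpD, hgrpD2, Matrix.mul_sub, Matrix.nonsing_inv_mul _ hSDd,
      Matrix.mul_smul, Matrix.mul_one, neg_sub]
  have hE' : E₀ = -((α • (1 : Matrix (Fin n) (Fin n) ℂ) + D)⁻¹ * ((-β) • 1 + D))
      + ((α • (1 : Matrix (Fin n) (Fin n) ℂ) + D)⁻¹ * LC) * ((RC * (β • (1 : Matrix (Fin m) (Fin m) ℂ) + A)⁻¹ * LB) * (((1 : Matrix (Fin p) (Fin p) ℂ) - (RB * (α • (1 : Matrix (Fin n) (Fin n) ℂ) + D)⁻¹ * LC) * (RC * (β • (1 : Matrix (Fin m) (Fin m) ℂ) + A)⁻¹ * LB))⁻¹ * ((α + β) • (RB * (α • (1 : Matrix (Fin n) (Fin n) ℂ) + D)⁻¹)))) := by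
    rw [hE1, Stmt9Aux.wood_inv (α • (1 : Matrix (Fin n) (Fin n) ℂ) + D) (β • (1 : Matrix (Fin m) (Fin m) ℂ) + A) LC RC LB RB hDd hWu, hWpush (RB * (α • (1 : Matrix (Fin n) (Fin n) ℂ) + D)⁻¹), hDtil']
    simp only [smul_add, Matrix.mul_smul, Matrix.mul_assoc]
    abel
  have key := Stmt9Def.key_induction
    (-((β • (1 : Matrix (Fin m) (Fin m) ℂ) + A)⁻¹ * ((-α) • 1 + A))) (-((α • (1 : Matrix (Fin n) (Fin n) ℂ) + D)⁻¹ * ((-β) • 1 + D)))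
    ((β • (1 : Matrix (Fin m) (Fin m) ℂ) + A)⁻¹ * LB) ((α + β) • (RB * (α • (1 : Matrix (Fin n) (Fin n) ℂ) + D)⁻¹)) ((α • (1 : Matrix (Fin n) (Fin n) ℂ) + D)⁻¹ * LC) ((α + β) • (RC * (β • (1 : Matrix (Fin m) (Fin m) ℂ) + A)⁻¹))
    (RC * (β • (1 : Matrix (Fin m) (Fin m) ℂ) + A)⁻¹ * LB) (RB * (α • (1 : Matrix (Fin n) (Fin n) ℂ) + D)⁻¹ * LC) E₀ F₀ G₀ H₀ hZu hH' hF' hG' hE' ΓA ΓD t X hX0 hstep t le_rfl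
  simpa only [Stmt9Def.Nblk, Stmt9Def.Mblk, Stmt9Def.Ublk, Stmt9Def.Vblk, Stmt9Def.TDm,
    Stmt9Def.TAm, Stmt9Def.UAm, Stmt9Def.VDm, Stmt9Def.UDm, Stmt9Def.VAm] using key
end

section
/- Assume I − T^D_t T^A_t is invertible and set X_t := U^A_t (I − T^D_t T^A_t)^{−1} V^D_t, L^B_t := L^B − U^A_t (I − T^D_t T^A_t)^{−1} (Ω_t J_t 𝟙_t ⊗ I_p), and R^B_t := R^B − (𝟙_t^T J_t ⊗ I_p)(I − T^D_t T^A_t)^{−1} V^D_t. Then the NARE residual factorizes in low rank: X_t C X_t − X_t D − A X_t + L^B R^B = L^B_t R^B_t. -/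
open Matrix Kronecker

/-- The signature matrix `J_t = diag(1, −1, …, (−1)^{t−1})`. -/
noncomputable def Jmat (t : ℕ) : Matrix (Fin t) (Fin t) ℂ :=
  Matrix.diagonal fun i => (-1 : ℂ) ^ (i : ℕ)

/-- `Ω_t = diag(α_{t−1}+β_{t−1}, …, α_0+β_0)`. -/
noncomputable def Omat (t : ℕ) (α β : ℕ → ℂ) : Matrix (Fin t) (Fin t) ℂ :=
  Matrix.diagonal fun i => α (t - 1 - (i : ℕ)) + β (t - 1 - (i : ℕ))

/-- The lower-triangular matrix `P^{α,β}_t` with `(i,i)` entry `α_{t−i}` and `(i,j)` entry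
`α_{t−j}+β_{t−j}` for `i > j` (1-based indexing in the paper, 0-based here). -/
noncomputable def Pmat (t : ℕ) (α β : ℕ → ℂ) : Matrix (Fin t) (Fin t) ℂ :=
  Matrix.of fun i j =>
    if i = j then α (t - 1 - (i : ℕ))
    else if j < i then α (t - 1 - (j : ℕ)) + β (t - 1 - (j : ℕ))
    else 0

/-- The all-ones column `𝟙_t`. -/
noncomputable def onesCol (t : ℕ) : Matrix (Fin t) (Fin 1) ℂ :=
  Matrix.of fun _ _ => 1

set_option linter.unusedSectionVars false
set_option linter.unusedVariables false


section AuxHelpers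


/-- Reindexing rows commutes with left multiplication. -/
private lemma rowsub_mul {R1 R2 C C2 : Type*} [Fintype C]
    (M : Matrix R1 C ℂ) (N : Matrix C C2 ℂ) (f : R2 → R1) :
    (M.submatrix f id) * N = (M * N).submatrix f id := by
  ext i j; simp [Matrix.mul_apply]

/-- Reindexing columns commutes with right multiplication. -/
private lemma mul_colsub {R C1 C2 C3 : Type*} [Fintype C1]
    (M : Matrix R C1 ℂ) (N : Matrix C1 C2 ℂ) (g : C3 → C2) :
    M * (N.submatrix id g) = (M * N).submatrix id g := by
  ext i j; simp [Matrix.mul_apply]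

/-- Contracting two `Fin 1`-fattened submatrices. -/
private lemma fatsub_mul {a b c : ℕ}
    (M : Matrix (Fin 1 × Fin a) (Fin 1 × Fin b) ℂ)
    (N : Matrix (Fin 1 × Fin b) (Fin 1 × Fin c) ℂ) :
    (M.submatrix (fun i => ((0 : Fin 1), i)) (fun j => ((0 : Fin 1), j))) *
      (N.submatrix (fun i => ((0 : Fin 1), i)) (fun j => ((0 : Fin 1), j)))
      = (M * N).submatrix (fun i => ((0 : Fin 1), i)) (fun j => ((0 : Fin 1), j)) := by
  ext i j
  simp only [Matrix.mul_apply, Matrix.submatrix_apply, id]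
  rw [Fintype.sum_prod_type]
  simp

/-- Any matrix is the fattened submatrix of its Kronecker product with `1`. -/
private lemma unfat {a b : ℕ} (M : Matrix (Fin a) (Fin b) ℂ) :
    M = (((1 : Matrix (Fin 1) (Fin 1) ℂ) ⊗ₖ M).submatrix
      (fun i => ((0 : Fin 1), i)) (fun j => ((0 : Fin 1), j))) := by
  ext i j
  simp [Matrix.one_apply]

/-- Inverses commute with whatever the matrix commutes with. -/
private lemma inv_comm' {κ : Type*} [Fintype κ] [DecidableEq κ] {M X : Matrix κ κ ℂ}
    (hM : IsUnit M) (h : M * X = X * M) : M⁻¹ * X = X * M⁻¹ := by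
  have hd : IsUnit M.det := (Matrix.isUnit_iff_isUnit_det M).mp hM
  calc M⁻¹ * X = M⁻¹ * X * (M * M⁻¹) := by rw [Matrix.mul_nonsing_inv _ hd, Matrix.mul_one]
    _ = M⁻¹ * (X * M) * M⁻¹ := by simp only [Matrix.mul_assoc]
    _ = M⁻¹ * (M * X) * M⁻¹ := by rw [h]
    _ = (M⁻¹ * M) * X * M⁻¹ := by simp only [Matrix.mul_assoc]
    _ = X * M⁻¹ := by rw [Matrix.nonsing_inv_mul _ hd, Matrix.one_mul]

/-- A Kronecker sum with a lower-triangular first factor is invertible provided all the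
diagonal shifts are. -/
private lemma isUnit_kron_add {t n : ℕ} (T : Matrix (Fin t) (Fin t) ℂ)
    (D : Matrix (Fin n) (Fin n) ℂ)
    (hT : ∀ i j : Fin t, i < j → T i j = 0)
    (hD : ∀ i : Fin t, IsUnit (T i i • (1 : Matrix (Fin n) (Fin n) ℂ) + D)) :
    IsUnit (T ⊗ₖ (1 : Matrix (Fin n) (Fin n) ℂ) + (1 : Matrix (Fin t) (Fin t) ℂ) ⊗ₖ D) := by
  set b : Fin t × Fin n → (Fin t)ᵒᵈ := fun x => OrderDual.toDual x.1 with hb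
  set M := T ⊗ₖ (1 : Matrix (Fin n) (Fin n) ℂ) + (1 : Matrix (Fin t) (Fin t) ℂ) ⊗ₖ D with hM
  have hbt : M.BlockTriangular b := by
    intro x y hxy
    have h1 : x.1 < y.1 := hxy
    simp only [hM, Matrix.add_apply, Matrix.kroneckerMap_apply]
    rw [hT _ _ h1, Matrix.one_apply_ne (ne_of_lt h1)]
    ring
  rw [Matrix.isUnit_iff_isUnit_det, hbt.det]
  refine Finset.prod_induction _ IsUnit (fun a c ha hc => ha.mul hc) isUnit_one ?_
  intro a ha
  obtain ⟨x, -, rfl⟩ := Finset.mem_image.mp ha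
  set i := x.1 with hi
  let e : Fin n ≃ {y : Fin t × Fin n // b y = b x} :=
    { toFun := fun a => ⟨(i, a), rfl⟩
      invFun := fun y => y.1.2
      left_inv := fun a => rfl
      right_inv := fun y => by
        have h : y.1.1 = i := OrderDual.toDual.injective y.2
        exact Subtype.ext (Prod.ext h.symm rfl) }
  have hdet : (M.toSquareBlock b (b x)).det
      = (T i i • (1 : Matrix (Fin n) (Fin n) ℂ) + D).det := by
    rw [← Matrix.det_submatrix_equiv_self e]
    congr 1
    ext a c
    simp [Matrix.toSquareBlock_def, hM, e, Matrix.one_apply, Matrix.smul_apply]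
  rw [hdet]
  exact (Matrix.isUnit_iff_isUnit_det _).mp (hD i)


private lemma submatrix_sub' {m n l o : Type*} (A B : Matrix m n ℂ) (r : l → m) (c : o → n) :
    A.submatrix r c - B.submatrix r c = (A - B).submatrix r c := rfl

private lemma submatrix_add' {m n l o : Type*} (A B : Matrix m n ℂ) (r : l → m) (c : o → n) :
    A.submatrix r c + B.submatrix r c = (A + B).submatrix r c := rfl

private lemma plain_mul_fatsub {a b : ℕ} (A : Matrix (Fin a) (Fin a) ℂ)
    (M : Matrix (Fin 1 × Fin a) (Fin 1 × Fin b) ℂ) :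
    A * (M.submatrix (fun i => ((0 : Fin 1), i)) (fun j => ((0 : Fin 1), j)))
      = (((1 : Matrix (Fin 1) (Fin 1) ℂ) ⊗ₖ A) * M).submatrix
          (fun i => ((0 : Fin 1), i)) (fun j => ((0 : Fin 1), j)) := by
  conv_lhs => rw [unfat A]
  rw [fatsub_mul]

private lemma fatsub_mul_plain {a b : ℕ} (D : Matrix (Fin b) (Fin b) ℂ)
    (M : Matrix (Fin 1 × Fin a) (Fin 1 × Fin b) ℂ) :
    (M.submatrix (fun i => ((0 : Fin 1), i)) (fun j => ((0 : Fin 1), j))) * D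
      = (M * ((1 : Matrix (Fin 1) (Fin 1) ℂ) ⊗ₖ D)).submatrix
          (fun i => ((0 : Fin 1), i)) (fun j => ((0 : Fin 1), j)) := by
  conv_lhs => rw [unfat D]
  rw [fatsub_mul]

private lemma plain_sub_fatsub {a b : ℕ} (A : Matrix (Fin a) (Fin b) ℂ)
    (M : Matrix (Fin 1 × Fin a) (Fin 1 × Fin b) ℂ) :
    A - (M.submatrix (fun i => ((0 : Fin 1), i)) (fun j => ((0 : Fin 1), j)))
      = (((1 : Matrix (Fin 1) (Fin 1) ℂ) ⊗ₖ A) - M).submatrix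
          (fun i => ((0 : Fin 1), i)) (fun j => ((0 : Fin 1), j)) := by
  conv_lhs => rw [unfat A]
  rw [submatrix_sub']

private lemma plainmul_eq_fatsub {a b e : ℕ} (A : Matrix (Fin a) (Fin b) ℂ)
    (B : Matrix (Fin b) (Fin e) ℂ) :
    A * B = (((1 : Matrix (Fin 1) (Fin 1) ℂ) ⊗ₖ A) * ((1 : Matrix (Fin 1) (Fin 1) ℂ) ⊗ₖ B)).submatrix
          (fun i => ((0 : Fin 1), i)) (fun j => ((0 : Fin 1), j)) := by
  conv_lhs => rw [unfat A, unfat B]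
  rw [fatsub_mul]

private lemma neg_one_sq_pow (k : ℕ) : ((-1 : ℂ)) ^ k * ((-1 : ℂ)) ^ k = 1 := by
  rw [← pow_add]
  exact Even.neg_one_pow ⟨k, rfl⟩

private lemma Qlow (t : ℕ) (γ δ : ℕ → ℂ) (i j : Fin t) (hij : i < j) :
    (Jmat t * Pmat t γ δ * Jmat t) i j = 0 := by
  have h1 : ¬(i = j) := ne_of_lt hij
  have h2 : ¬(j < i) := not_lt.mpr hij.le
  rw [Jmat, Matrix.mul_diagonal, Matrix.diagonal_mul, Pmat]
  simp [h1, h2]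

private lemma Qdiag (t : ℕ) (γ δ : ℕ → ℂ) (i : Fin t) :
    (Jmat t * Pmat t γ δ * Jmat t) i i = γ (t - 1 - (i : ℕ)) := by
  rw [Jmat, Matrix.mul_diagonal, Matrix.diagonal_mul, Pmat]
  simp only [Matrix.of_apply, eq_self_iff_true, if_true]
  rw [mul_right_comm, neg_one_sq_pow, one_mul]

private lemma G_identity (t : ℕ) (α β : ℕ → ℂ)
    (hne : ∀ i : Fin t, α (t - 1 - (i : ℕ)) + β (t - 1 - (i : ℕ)) ≠ 0) :
    (Omat t α β * Jmat t * onesCol t) * ((onesCol t)ᵀ * Jmat t)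
      = Omat t α β * (Jmat t * Pmat t α β * Jmat t) * (Omat t α β)⁻¹
        + (Jmat t * Pmat t β α * Jmat t)ᵀ := by
  have hinv : (Omat t α β)⁻¹
      = Matrix.diagonal fun i : Fin t =>
          (α (t - 1 - (i : ℕ)) + β (t - 1 - (i : ℕ)))⁻¹ := by
    apply Matrix.inv_eq_right_inv
    rw [Omat, Matrix.diagonal_mul_diagonal]
    rw [show (fun i : Fin t => (α (t - 1 - (i : ℕ)) + β (t - 1 - (i : ℕ)))
        * (α (t - 1 - (i : ℕ)) + β (t - 1 - (i : ℕ)))⁻¹) = fun _ => (1 : ℂ) from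
      funext fun i => mul_inv_cancel₀ (hne i)]
    exact Matrix.diagonal_one
  ext i j
  have hL : ((Omat t α β * Jmat t * onesCol t) * ((onesCol t)ᵀ * Jmat t)) i j
      = (α (t - 1 - (i : ℕ)) + β (t - 1 - (i : ℕ))) * (-1 : ℂ) ^ (i : ℕ)
          * (-1 : ℂ) ^ (j : ℕ) := by
    rw [Matrix.mul_apply, Fin.sum_univ_one, Omat, Jmat, Matrix.diagonal_mul_diagonal,
      Matrix.diagonal_mul, Matrix.mul_diagonal, Matrix.transpose_apply]
    simp only [onesCol, Matrix.of_apply, mul_one, one_mul]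
  rw [hL, Matrix.add_apply, Matrix.transpose_apply, hinv]
  simp only [Omat, Jmat, Pmat,
    Matrix.mul_diagonal, Matrix.diagonal_mul, Matrix.of_apply]
  rcases lt_trichotomy i j with h | h | h
  · have h1 : ¬(i = j) := ne_of_lt h
    have h1' : ¬(j = i) := ne_of_gt h
    have h2 : ¬(j < i) := not_lt.mpr h.le
    rw [if_neg h1, if_neg h2, if_neg h1', if_pos h]
    ring
  · subst h
    rw [if_pos rfl, if_pos rfl]
    have hv := hne i
    field_simp
  · have h1 : ¬(i = j) := ne_of_gt h
    have h1' : ¬(j = i) := ne_of_lt h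
    have h2 : ¬(i < j) := not_lt.mpr h.le
    rw [if_neg h1, if_pos h, if_neg h1', if_neg h2]
    have hv := hne j
    field_simp
    ring


section CoreSec

variable {ip iq im inn ipp iqq : Type*}
  [Fintype ip] [Fintype iq] [Fintype im] [Fintype inn] [Fintype ipp] [Fintype iqq]
  [DecidableEq ip] [DecidableEq iq]

private lemma abstract_residual
    (S Λp Υp : Matrix ip ip ℂ) (Λq Υq : Matrix iq iq ℂ)
    (TA : Matrix iq ip ℂ) (TD : Matrix ip iq ℂ)
    (UA : Matrix im ip ℂ) (VD : Matrix ip inn ℂ)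
    (W : Matrix ip ipp ℂ) (Z : Matrix ipp ip ℂ)
    (Wq : Matrix iq iqq ℂ) (Zq : Matrix iqq iq ℂ)
    (LB : Matrix im ipp ℂ) (RB : Matrix ipp inn ℂ)
    (LC : Matrix inn iqq ℂ) (RC : Matrix iqq im ℂ)
    (A : Matrix im im ℂ) (D : Matrix inn inn ℂ)
    (h1 : S * (1 - TD * TA) = 1) (h2 : (1 - TD * TA) * S = 1)
    (hK1 : A * UA = LB * Z - UA * Υp)
    (hK2 : VD * D = W * RB - Λp * VD)
    (hK3 : RC * UA = Zq * TA)
    (hK4 : VD * LC = TD * Wq)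
    (hK5 : TA * Υp = Υq * TA)
    (hK6 : TD * Λq = Λp * TD)
    (hK7p : W * Z = Λp + Υp)
    (hK7q : Wq * Zq = Λq + Υq) :
    (UA * S * VD) * (LC * RC) * (UA * S * VD) - (UA * S * VD) * D - A * (UA * S * VD)
      + LB * RB = (LB - UA * S * W) * (RB - Z * (S * VD)) := by
  have hVD1 : (1 - TD * TA) * (S * VD) = VD := by
    rw [← Matrix.mul_assoc, h2, Matrix.one_mul]
  have k1 : ∀ Y : Matrix ip inn ℂ, A * (UA * Y) = LB * (Z * Y) - UA * (Υp * Y) := fun Y => by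
    rw [← Matrix.mul_assoc, hK1, Matrix.sub_mul, Matrix.mul_assoc, Matrix.mul_assoc]
  have k3 : ∀ Y : Matrix ip inn ℂ, RC * (UA * Y) = Zq * (TA * Y) := fun Y => by
    rw [← Matrix.mul_assoc, hK3, Matrix.mul_assoc]
  have k4 : ∀ Y : Matrix iqq inn ℂ, VD * (LC * Y) = TD * (Wq * Y) := fun Y => by
    rw [← Matrix.mul_assoc, hK4, Matrix.mul_assoc]
  have k5 : ∀ Y : Matrix ip inn ℂ, Υq * (TA * Y) = TA * (Υp * Y) := fun Y => by
    rw [← Matrix.mul_assoc, ← hK5, Matrix.mul_assoc]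
  have k6 : ∀ Y : Matrix iq inn ℂ, TD * (Λq * Y) = Λp * (TD * Y) := fun Y => by
    rw [← Matrix.mul_assoc, hK6, Matrix.mul_assoc]
  have k7p : ∀ Y : Matrix ip inn ℂ, W * (Z * Y) = Λp * Y + Υp * Y := fun Y => by
    rw [← Matrix.mul_assoc, hK7p, Matrix.add_mul]
  have k7q : ∀ Y : Matrix iq inn ℂ, Wq * (Zq * Y) = Λq * Y + Υq * Y := fun Y => by
    rw [← Matrix.mul_assoc, hK7q, Matrix.add_mul]
  have hC : (UA * S * VD) * (LC * RC) * (UA * S * VD)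
      = UA * (S * (Λp * (TD * (TA * (S * VD)))))
        + UA * (S * (TD * (TA * (Υp * (S * VD))))) := by
    simp only [Matrix.mul_assoc]
    rw [k3 (S * VD), k4, k7q, Matrix.mul_add, k6, k5, Matrix.mul_add, Matrix.mul_add]
  have hΛpVD : Λp * VD = Λp * (S * VD) - Λp * (TD * (TA * (S * VD))) := by
    conv_lhs => rw [← hVD1]
    simp only [Matrix.sub_mul, Matrix.one_mul, Matrix.mul_sub, Matrix.mul_assoc]
  have hD : (UA * S * VD) * D
      = UA * (S * (W * RB)) -
        (UA * (S * (Λp * (S * VD))) - UA * (S * (Λp * (TD * (TA * (S * VD)))))) := by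
    simp only [Matrix.mul_assoc]
    rw [hK2, hΛpVD, Matrix.mul_sub, Matrix.mul_sub, Matrix.mul_sub, Matrix.mul_sub]
  have hUAabs : ∀ Y : Matrix ip inn ℂ,
      UA * Y = UA * (S * Y) - UA * (S * (TD * (TA * Y))) := fun Y => by
    conv_lhs => rw [← Matrix.one_mul Y, ← h1, Matrix.mul_assoc]
    simp only [Matrix.sub_mul, Matrix.one_mul, Matrix.mul_sub, Matrix.mul_assoc]
  have hA : A * (UA * S * VD)
      = LB * (Z * (S * VD)) -
        (UA * (S * (Υp * (S * VD))) - UA * (S * (TD * (TA * (Υp * (S * VD)))))) := by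
    rw [Matrix.mul_assoc UA S VD, k1 (S * VD), hUAabs (Υp * (S * VD))]
  have hR : (LB - UA * S * W) * (RB - Z * (S * VD))
      = LB * RB - LB * (Z * (S * VD)) - UA * (S * (W * RB))
        + (UA * (S * (Λp * (S * VD))) + UA * (S * (Υp * (S * VD)))) := by
    simp only [Matrix.sub_mul, Matrix.mul_sub, Matrix.mul_assoc]
    rw [k7p, Matrix.mul_add, Matrix.mul_add]
    abel
  rw [hC, hD, hA, hR]
  abel





private lemma residual_core {m n p q t : ℕ}
    (A : Matrix (Fin m) (Fin m) ℂ) (D : Matrix (Fin n) (Fin n) ℂ)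
    (LB : Matrix (Fin m) (Fin p) ℂ) (RB : Matrix (Fin p) (Fin n) ℂ)
    (LC : Matrix (Fin n) (Fin q) ℂ) (RC : Matrix (Fin q) (Fin m) ℂ)
    (c : Matrix (Fin 1) (Fin t) ℂ) (d w : Matrix (Fin t) (Fin 1) ℂ)
    (QD QA Ω : Matrix (Fin t) (Fin t) ℂ)
    (KD : Matrix (Fin t × Fin n) (Fin t × Fin n) ℂ)
    (KA' : Matrix (Fin t × Fin m) (Fin t × Fin m) ℂ)
    (hMDu : IsUnit (QD ⊗ₖ (1 : Matrix (Fin n) (Fin n) ℂ) +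
      (1 : Matrix (Fin t) (Fin t) ℂ) ⊗ₖ D))
    (hNAu : IsUnit (QAᵀ ⊗ₖ (1 : Matrix (Fin m) (Fin m) ℂ) +
      (1 : Matrix (Fin t) (Fin t) ℂ) ⊗ₖ A))
    (hKD : KD = (QD ⊗ₖ (1 : Matrix (Fin n) (Fin n) ℂ) +
      (1 : Matrix (Fin t) (Fin t) ℂ) ⊗ₖ D)⁻¹)
    (hKA' : KA' = (QAᵀ ⊗ₖ (1 : Matrix (Fin m) (Fin m) ℂ) +
      (1 : Matrix (Fin t) (Fin t) ℂ) ⊗ₖ A)⁻¹)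
    (hΩ : Ω⁻¹ * Ω = 1)
    (hw : Ω * d = w)
    (hG : w * c = Ω * QD * Ω⁻¹ + QAᵀ)
    (TA : Matrix (Fin t × Fin q) (Fin t × Fin p) ℂ)
    (hTA : TA = ((1 : Matrix (Fin t) (Fin t) ℂ) ⊗ₖ RC) * KA' *
      ((1 : Matrix (Fin t) (Fin t) ℂ) ⊗ₖ LB))
    (TD : Matrix (Fin t × Fin p) (Fin t × Fin q) ℂ)
    (hTD : TD = (Ω ⊗ₖ RB) * KD * (Ω⁻¹ ⊗ₖ LC))
    (hinv : IsUnit (1 - TD * TA))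
    (S : Matrix (Fin t × Fin p) (Fin t × Fin p) ℂ)
    (hS : S = (1 - TD * TA)⁻¹)
    (UA' : Matrix (Fin 1 × Fin m) (Fin t × Fin p) ℂ)
    (hUA' : UA' = (c ⊗ₖ (1 : Matrix (Fin m) (Fin m) ℂ)) * KA' *
      ((1 : Matrix (Fin t) (Fin t) ℂ) ⊗ₖ LB))
    (VD' : Matrix (Fin t × Fin p) (Fin 1 × Fin n) ℂ)
    (hVD' : VD' = (Ω ⊗ₖ RB) * KD * (d ⊗ₖ (1 : Matrix (Fin n) (Fin n) ℂ))) :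
    (UA' * S * VD') * (((1 : Matrix (Fin 1) (Fin 1) ℂ) ⊗ₖ LC) *
        ((1 : Matrix (Fin 1) (Fin 1) ℂ) ⊗ₖ RC)) * (UA' * S * VD')
      - (UA' * S * VD') * ((1 : Matrix (Fin 1) (Fin 1) ℂ) ⊗ₖ D)
      - ((1 : Matrix (Fin 1) (Fin 1) ℂ) ⊗ₖ A) * (UA' * S * VD')
      + ((1 : Matrix (Fin 1) (Fin 1) ℂ) ⊗ₖ LB) * ((1 : Matrix (Fin 1) (Fin 1) ℂ) ⊗ₖ RB)
      = (((1 : Matrix (Fin 1) (Fin 1) ℂ) ⊗ₖ LB) -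
          UA' * S * (w ⊗ₖ (1 : Matrix (Fin p) (Fin p) ℂ)))
        * (((1 : Matrix (Fin 1) (Fin 1) ℂ) ⊗ₖ RB) -
          (c ⊗ₖ (1 : Matrix (Fin p) (Fin p) ℂ)) * (S * VD')) := by
  have hSdet : IsUnit (1 - TD * TA).det := (Matrix.isUnit_iff_isUnit_det _).mp hinv
  have h1 : S * (1 - TD * TA) = 1 := by rw [hS]; exact Matrix.nonsing_inv_mul _ hSdet
  have h2 : (1 - TD * TA) * S = 1 := by rw [hS]; exact Matrix.mul_nonsing_inv _ hSdet
  have hMDdet := (Matrix.isUnit_iff_isUnit_det _).mp hMDu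
  have hNAdet := (Matrix.isUnit_iff_isUnit_det _).mp hNAu
  -- commutation relations
  have bD3 : KD * (QD ⊗ₖ (1 : Matrix (Fin n) (Fin n) ℂ))
      = (QD ⊗ₖ (1 : Matrix (Fin n) (Fin n) ℂ)) * KD := by
    rw [hKD]
    refine inv_comm' hMDu ?_
    rw [Matrix.add_mul, Matrix.mul_add]
    simp only [← Matrix.mul_kronecker_mul, Matrix.one_mul, Matrix.mul_one]
  have bA5 : KA' * (QAᵀ ⊗ₖ (1 : Matrix (Fin m) (Fin m) ℂ))
      = (QAᵀ ⊗ₖ (1 : Matrix (Fin m) (Fin m) ℂ)) * KA' := by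
    rw [hKA']
    refine inv_comm' hNAu ?_
    rw [Matrix.add_mul, Matrix.mul_add]
    simp only [← Matrix.mul_kronecker_mul, Matrix.one_mul, Matrix.mul_one]
  have bD2 : KD * ((1 : Matrix (Fin t) (Fin t) ℂ) ⊗ₖ D)
      = 1 - KD * (QD ⊗ₖ (1 : Matrix (Fin n) (Fin n) ℂ)) :=
    eq_sub_of_add_eq' (by rw [← Matrix.mul_add, hKD, Matrix.nonsing_inv_mul _ hMDdet])
  have bA2 : ((1 : Matrix (Fin t) (Fin t) ℂ) ⊗ₖ A) * KA'
      = 1 - (QAᵀ ⊗ₖ (1 : Matrix (Fin m) (Fin m) ℂ)) * KA' :=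
    eq_sub_of_add_eq' (by rw [← Matrix.add_mul, hKA', Matrix.mul_nonsing_inv _ hNAdet])
  -- small Ω facts
  have hdw : Ω⁻¹ * w = d := by rw [← hw, ← Matrix.mul_assoc, hΩ, Matrix.one_mul]
  set Φ := Ω * QD * Ω⁻¹ with hΦ
  have hΩQD : Φ * Ω = Ω * QD := by
    rw [hΦ, Matrix.mul_assoc (Ω * QD), hΩ, Matrix.mul_one]
  have hQDΩ : Ω⁻¹ * Φ = QD * Ω⁻¹ := by
    rw [hΦ, ← Matrix.mul_assoc, ← Matrix.mul_assoc, hΩ, Matrix.one_mul]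
  -- Kronecker base identities
  have bA1 : ((1 : Matrix (Fin 1) (Fin 1) ℂ) ⊗ₖ A) * (c ⊗ₖ (1 : Matrix (Fin m) (Fin m) ℂ))
      = (c ⊗ₖ (1 : Matrix (Fin m) (Fin m) ℂ)) * ((1 : Matrix (Fin t) (Fin t) ℂ) ⊗ₖ A) := by
    simp only [← Matrix.mul_kronecker_mul, Matrix.one_mul, Matrix.mul_one]
  have bA3 : (c ⊗ₖ (1 : Matrix (Fin m) (Fin m) ℂ)) * ((1 : Matrix (Fin t) (Fin t) ℂ) ⊗ₖ LB)
      = ((1 : Matrix (Fin 1) (Fin 1) ℂ) ⊗ₖ LB) * (c ⊗ₖ (1 : Matrix (Fin p) (Fin p) ℂ)) := by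
    simp only [← Matrix.mul_kronecker_mul, Matrix.one_mul, Matrix.mul_one]
  have bA4 : (QAᵀ ⊗ₖ (1 : Matrix (Fin m) (Fin m) ℂ)) * ((1 : Matrix (Fin t) (Fin t) ℂ) ⊗ₖ LB)
      = ((1 : Matrix (Fin t) (Fin t) ℂ) ⊗ₖ LB) * (QAᵀ ⊗ₖ (1 : Matrix (Fin p) (Fin p) ℂ)) := by
    simp only [← Matrix.mul_kronecker_mul, Matrix.one_mul, Matrix.mul_one]
  have bA6 : ((1 : Matrix (Fin 1) (Fin 1) ℂ) ⊗ₖ RC) * (c ⊗ₖ (1 : Matrix (Fin m) (Fin m) ℂ))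
      = (c ⊗ₖ (1 : Matrix (Fin q) (Fin q) ℂ)) * ((1 : Matrix (Fin t) (Fin t) ℂ) ⊗ₖ RC) := by
    simp only [← Matrix.mul_kronecker_mul, Matrix.one_mul, Matrix.mul_one]
  have bA7 : (QAᵀ ⊗ₖ (1 : Matrix (Fin q) (Fin q) ℂ)) * ((1 : Matrix (Fin t) (Fin t) ℂ) ⊗ₖ RC)
      = ((1 : Matrix (Fin t) (Fin t) ℂ) ⊗ₖ RC) * (QAᵀ ⊗ₖ (1 : Matrix (Fin m) (Fin m) ℂ)) := by
    simp only [← Matrix.mul_kronecker_mul, Matrix.one_mul, Matrix.mul_one]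
  have bD1 : (d ⊗ₖ (1 : Matrix (Fin n) (Fin n) ℂ)) * ((1 : Matrix (Fin 1) (Fin 1) ℂ) ⊗ₖ D)
      = ((1 : Matrix (Fin t) (Fin t) ℂ) ⊗ₖ D) * (d ⊗ₖ (1 : Matrix (Fin n) (Fin n) ℂ)) := by
    simp only [← Matrix.mul_kronecker_mul, Matrix.one_mul, Matrix.mul_one]
  have bD4 : (Ω ⊗ₖ RB) * (d ⊗ₖ (1 : Matrix (Fin n) (Fin n) ℂ))
      = (w ⊗ₖ (1 : Matrix (Fin p) (Fin p) ℂ)) * ((1 : Matrix (Fin 1) (Fin 1) ℂ) ⊗ₖ RB) := by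
    simp only [← Matrix.mul_kronecker_mul, Matrix.one_mul, Matrix.mul_one]
    rw [hw]
  have bD5 : (Ω ⊗ₖ RB) * (QD ⊗ₖ (1 : Matrix (Fin n) (Fin n) ℂ))
      = (Φ ⊗ₖ (1 : Matrix (Fin p) (Fin p) ℂ)) * (Ω ⊗ₖ RB) := by
    simp only [← Matrix.mul_kronecker_mul, Matrix.one_mul, Matrix.mul_one]
    rw [hΩQD]
  have bD6 : (d ⊗ₖ (1 : Matrix (Fin n) (Fin n) ℂ)) * ((1 : Matrix (Fin 1) (Fin 1) ℂ) ⊗ₖ LC)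
      = (Ω⁻¹ ⊗ₖ LC) * (w ⊗ₖ (1 : Matrix (Fin q) (Fin q) ℂ)) := by
    simp only [← Matrix.mul_kronecker_mul, Matrix.one_mul, Matrix.mul_one]
    rw [hdw]
  have bD7 : (Ω⁻¹ ⊗ₖ LC) * (Φ ⊗ₖ (1 : Matrix (Fin q) (Fin q) ℂ))
      = (QD ⊗ₖ (1 : Matrix (Fin n) (Fin n) ℂ)) * (Ω⁻¹ ⊗ₖ LC) := by
    simp only [← Matrix.mul_kronecker_mul, Matrix.one_mul, Matrix.mul_one]
    rw [hQDΩ]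
  have bW : (w ⊗ₖ (1 : Matrix (Fin p) (Fin p) ℂ)) * (c ⊗ₖ (1 : Matrix (Fin p) (Fin p) ℂ))
      = (Φ ⊗ₖ (1 : Matrix (Fin p) (Fin p) ℂ))
        + (QAᵀ ⊗ₖ (1 : Matrix (Fin p) (Fin p) ℂ)) := by
    simp only [← Matrix.mul_kronecker_mul, Matrix.mul_one]
    rw [hG, Matrix.add_kronecker]
  have bWq : (w ⊗ₖ (1 : Matrix (Fin q) (Fin q) ℂ)) * (c ⊗ₖ (1 : Matrix (Fin q) (Fin q) ℂ))
      = (Φ ⊗ₖ (1 : Matrix (Fin q) (Fin q) ℂ))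
        + (QAᵀ ⊗ₖ (1 : Matrix (Fin q) (Fin q) ℂ)) := by
    simp only [← Matrix.mul_kronecker_mul, Matrix.mul_one]
    rw [hG, Matrix.add_kronecker]
  -- main K identities
  have kk1 : ((1 : Matrix (Fin 1) (Fin 1) ℂ) ⊗ₖ A) * UA'
      = ((1 : Matrix (Fin 1) (Fin 1) ℂ) ⊗ₖ LB) * (c ⊗ₖ (1 : Matrix (Fin p) (Fin p) ℂ))
        - UA' * (QAᵀ ⊗ₖ (1 : Matrix (Fin p) (Fin p) ℂ)) := by
    rw [hUA']
    simp only [Matrix.mul_assoc]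
    rw [← Matrix.mul_assoc (_ ⊗ₖ A), bA1, Matrix.mul_assoc,
      ← Matrix.mul_assoc (_ ⊗ₖ A), bA2]
    rw [Matrix.sub_mul, Matrix.one_mul, Matrix.mul_sub]
    rw [bA3]
    congr 1
    rw [← bA5]
    simp only [Matrix.mul_assoc]
    rw [bA4]
  have kk2 : VD' * ((1 : Matrix (Fin 1) (Fin 1) ℂ) ⊗ₖ D)
      = (w ⊗ₖ (1 : Matrix (Fin p) (Fin p) ℂ)) * ((1 : Matrix (Fin 1) (Fin 1) ℂ) ⊗ₖ RB)
        - (Φ ⊗ₖ (1 : Matrix (Fin p) (Fin p) ℂ)) * VD' := by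
    rw [hVD']
    simp only [Matrix.mul_assoc]
    rw [bD1, ← Matrix.mul_assoc KD, bD2]
    rw [Matrix.sub_mul, Matrix.one_mul, Matrix.mul_sub]
    rw [bD4]
    congr 1
    rw [bD3]
    simp only [Matrix.mul_assoc]
    rw [← Matrix.mul_assoc (Ω ⊗ₖ RB), bD5, Matrix.mul_assoc]
  have kk3 : ((1 : Matrix (Fin 1) (Fin 1) ℂ) ⊗ₖ RC) * UA'
      = (c ⊗ₖ (1 : Matrix (Fin q) (Fin q) ℂ)) * TA := by
    rw [hUA', hTA]
    simp only [Matrix.mul_assoc]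
    rw [← Matrix.mul_assoc (_ ⊗ₖ RC), bA6, Matrix.mul_assoc]
  have kk4 : VD' * ((1 : Matrix (Fin 1) (Fin 1) ℂ) ⊗ₖ LC)
      = TD * (w ⊗ₖ (1 : Matrix (Fin q) (Fin q) ℂ)) := by
    rw [hVD', hTD]
    simp only [Matrix.mul_assoc]
    rw [bD6]
  have kk5 : TA * (QAᵀ ⊗ₖ (1 : Matrix (Fin p) (Fin p) ℂ))
      = (QAᵀ ⊗ₖ (1 : Matrix (Fin q) (Fin q) ℂ)) * TA := by
    rw [hTA]
    simp only [Matrix.mul_assoc]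
    rw [← bA4, ← Matrix.mul_assoc KA', bA5]
    simp only [Matrix.mul_assoc]
    rw [← Matrix.mul_assoc (_ ⊗ₖ RC), ← bA7, Matrix.mul_assoc]
  have kk6 : TD * (Φ ⊗ₖ (1 : Matrix (Fin q) (Fin q) ℂ))
      = (Φ ⊗ₖ (1 : Matrix (Fin p) (Fin p) ℂ)) * TD := by
    rw [hTD]
    simp only [Matrix.mul_assoc]
    rw [bD7, ← Matrix.mul_assoc KD, bD3]
    simp only [Matrix.mul_assoc]
    rw [← Matrix.mul_assoc (Ω ⊗ₖ RB), bD5, Matrix.mul_assoc]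
  exact abstract_residual S _ _ _ _ TA TD UA' VD' _ _ _ _ _ _ _ _ _ _
    h1 h2 kk1 kk2 kk3 kk4 kk5 kk6 bW bWq

end CoreSec


/-- Low-rank factorization of the NARE residual at the structured
approximation `X_t = U^A_t (I − T^D_t T^A_t)⁻¹ V^D_t`:
`X_t C X_t − X_t D − A X_t + L^B R^B = L^B_t R^B_t`. -/
theorem residual_low_rank_factorization {m n p q t : ℕ}
    (hm : 0 < m) (hn : 0 < n) (hp : 0 < p) (hq : 0 < q) (ht : 0 < t)
    (A : Matrix (Fin m) (Fin m) ℂ) (D : Matrix (Fin n) (Fin n) ℂ)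
    (LB : Matrix (Fin m) (Fin p) ℂ) (RB : Matrix (Fin p) (Fin n) ℂ)
    (LC : Matrix (Fin n) (Fin q) ℂ) (RC : Matrix (Fin q) (Fin m) ℂ)
    (α β : ℕ → ℂ)
    (hshift : ∀ l < t, α l + β l ≠ 0 ∧
      IsUnit (α l • (1 : Matrix (Fin n) (Fin n) ℂ) + D) ∧
      IsUnit (β l • (1 : Matrix (Fin m) (Fin m) ℂ) + A))
    (KD : Matrix (Fin t × Fin n) (Fin t × Fin n) ℂ)
    (hKD : KD = ((Jmat t * Pmat t α β * Jmat t) ⊗ₖ (1 : Matrix (Fin n) (Fin n) ℂ) +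
      (1 : Matrix (Fin t) (Fin t) ℂ) ⊗ₖ D)⁻¹)
    (KA : Matrix (Fin t × Fin m) (Fin t × Fin m) ℂ)
    (hKA : KA = ((Jmat t * Pmat t β α * Jmat t) ⊗ₖ (1 : Matrix (Fin m) (Fin m) ℂ) +
      (1 : Matrix (Fin t) (Fin t) ℂ) ⊗ₖ Aᵀ)⁻¹)
    (UA : Matrix (Fin m) (Fin t × Fin p) ℂ)
    (hUA : UA = ((((onesCol t)ᵀ * Jmat t) ⊗ₖ (1 : Matrix (Fin m) (Fin m) ℂ)) * KAᵀ *
      ((1 : Matrix (Fin t) (Fin t) ℂ) ⊗ₖ LB)).submatrix (fun i => ((0 : Fin 1), i)) id)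
    (VD : Matrix (Fin t × Fin p) (Fin n) ℂ)
    (hVD : VD = (((Omat t α β) ⊗ₖ RB) * KD *
      ((Jmat t * onesCol t) ⊗ₖ (1 : Matrix (Fin n) (Fin n) ℂ))).submatrix id
        (fun j => ((0 : Fin 1), j)))
    (TA : Matrix (Fin t × Fin q) (Fin t × Fin p) ℂ)
    (hTA : TA = ((1 : Matrix (Fin t) (Fin t) ℂ) ⊗ₖ RC) * KAᵀ *
      ((1 : Matrix (Fin t) (Fin t) ℂ) ⊗ₖ LB))
    (TD : Matrix (Fin t × Fin p) (Fin t × Fin q) ℂ)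
    (hTD : TD = ((Omat t α β) ⊗ₖ RB) * KD * ((Omat t α β)⁻¹ ⊗ₖ LC))
    (hinv : IsUnit (1 - TD * TA))
    (Xt : Matrix (Fin m) (Fin n) ℂ)
    (hXt : Xt = UA * (1 - TD * TA)⁻¹ * VD)
    (LBt : Matrix (Fin m) (Fin p) ℂ)
    (hLBt : LBt = LB - (UA * (1 - TD * TA)⁻¹ *
      ((Omat t α β * Jmat t * onesCol t) ⊗ₖ (1 : Matrix (Fin p) (Fin p) ℂ))).submatrix id
        (fun k => ((0 : Fin 1), k)))
    (RBt : Matrix (Fin p) (Fin n) ℂ)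
    (hRBt : RBt = RB - ((((onesCol t)ᵀ * Jmat t) ⊗ₖ (1 : Matrix (Fin p) (Fin p) ℂ)) *
      (1 - TD * TA)⁻¹ * VD).submatrix (fun k => ((0 : Fin 1), k)) id) :
    Xt * (LC * RC) * Xt - Xt * D - A * Xt + LB * RB = LBt * RBt := by
  have htlt : ∀ i : Fin t, t - 1 - (i : ℕ) < t := fun i =>
    lt_of_le_of_lt (Nat.sub_le _ _) (Nat.sub_lt ht Nat.one_pos)
  have hωne : ∀ i : Fin t, α (t - 1 - (i : ℕ)) + β (t - 1 - (i : ℕ)) ≠ 0 :=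
    fun i => (hshift _ (htlt i)).1
  have hMDu : IsUnit ((Jmat t * Pmat t α β * Jmat t) ⊗ₖ (1 : Matrix (Fin n) (Fin n) ℂ) +
      (1 : Matrix (Fin t) (Fin t) ℂ) ⊗ₖ D) := by
    refine isUnit_kron_add _ _ (fun i j h => Qlow t α β i j h) (fun i => ?_)
    rw [Qdiag t α β i]
    exact (hshift _ (htlt i)).2.1
  have hMAu : IsUnit ((Jmat t * Pmat t β α * Jmat t) ⊗ₖ (1 : Matrix (Fin m) (Fin m) ℂ) +
      (1 : Matrix (Fin t) (Fin t) ℂ) ⊗ₖ Aᵀ) := by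
    refine isUnit_kron_add _ _ (fun i j h => Qlow t β α i j h) (fun i => ?_)
    rw [Qdiag t β α i]
    have h := (hshift _ (htlt i)).2.2
    rw [Matrix.isUnit_iff_isUnit_det] at h ⊢
    rw [show β (t - 1 - (i : ℕ)) • (1 : Matrix (Fin m) (Fin m) ℂ) + Aᵀ
        = (β (t - 1 - (i : ℕ)) • (1 : Matrix (Fin m) (Fin m) ℂ) + A)ᵀ from by
      rw [Matrix.transpose_add, Matrix.transpose_smul, Matrix.transpose_one],
      Matrix.det_transpose]
    exact h
  have hMAT : ((Jmat t * Pmat t β α * Jmat t) ⊗ₖ (1 : Matrix (Fin m) (Fin m) ℂ) +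
      (1 : Matrix (Fin t) (Fin t) ℂ) ⊗ₖ Aᵀ)ᵀ
      = (Jmat t * Pmat t β α * Jmat t)ᵀ ⊗ₖ (1 : Matrix (Fin m) (Fin m) ℂ) +
        (1 : Matrix (Fin t) (Fin t) ℂ) ⊗ₖ A := by
    rw [Matrix.transpose_add]
    simp only [← Matrix.kroneckerMap_transpose, Matrix.transpose_one, Matrix.transpose_transpose]
  have hNAu : IsUnit ((Jmat t * Pmat t β α * Jmat t)ᵀ ⊗ₖ (1 : Matrix (Fin m) (Fin m) ℂ) +
      (1 : Matrix (Fin t) (Fin t) ℂ) ⊗ₖ A) := by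
    rw [← hMAT, Matrix.isUnit_iff_isUnit_det, Matrix.det_transpose,
      ← Matrix.isUnit_iff_isUnit_det]
    exact hMAu
  have hKAT : KAᵀ = ((Jmat t * Pmat t β α * Jmat t)ᵀ ⊗ₖ (1 : Matrix (Fin m) (Fin m) ℂ) +
      (1 : Matrix (Fin t) (Fin t) ℂ) ⊗ₖ A)⁻¹ := by
    rw [hKA, Matrix.transpose_nonsing_inv, hMAT]
  have hΩinv : (Omat t α β)⁻¹ * Omat t α β = 1 := by
    apply Matrix.nonsing_inv_mul
    rw [Omat, Matrix.det_diagonal]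
    exact isUnit_iff_ne_zero.mpr (Finset.prod_ne_zero_iff.mpr fun i _ => hωne i)
  have core := residual_core A D LB RB LC RC ((onesCol t)ᵀ * Jmat t) (Jmat t * onesCol t)
    (Omat t α β * Jmat t * onesCol t) (Jmat t * Pmat t α β * Jmat t)
    (Jmat t * Pmat t β α * Jmat t) (Omat t α β) KD KAᵀ hMDu hNAu hKD hKAT hΩinv
    (Matrix.mul_assoc _ _ _).symm (G_identity t α β hωne) TA hTA TD hTD hinv
    ((1 - TD * TA)⁻¹) rfl
    ((((onesCol t)ᵀ * Jmat t) ⊗ₖ (1 : Matrix (Fin m) (Fin m) ℂ)) * KAᵀ *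
      ((1 : Matrix (Fin t) (Fin t) ℂ) ⊗ₖ LB)) rfl
    (((Omat t α β) ⊗ₖ RB) * KD *
      ((Jmat t * onesCol t) ⊗ₖ (1 : Matrix (Fin n) (Fin n) ℂ))) rfl
  rw [hXt, hLBt, hRBt, hUA, hVD]
  rw [plainmul_eq_fatsub LC RC, plainmul_eq_fatsub LB RB]
  simp only [rowsub_mul, mul_colsub, Matrix.submatrix_submatrix, Function.comp_id,
    Function.id_comp]
  rw [plain_mul_fatsub A, fatsub_mul_plain D]
  simp only [fatsub_mul, plain_sub_fatsub, submatrix_sub', submatrix_add']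
  simp only [Matrix.mul_assoc]
  simp only [Matrix.mul_assoc] at core
  rw [core]
end AuxHelpers
end

section
/- Let λ ∈ ℂ satisfy λ + α_l ≠ 0 for all l = 0, …, t−1. Then J_t P^{α,β}_t J_t + λ I_t is invertible, and the column vector (J_t P^{α,β}_t J_t + λ I_t)^{−1} J_t 𝟙_t has i-th entry (1-based, i = 1, …, t) equal to [∏_{l=1}^{i−1} (β_{t−l} − λ)/(λ + α_{t−l})] · 1/(λ + α_{t−i}). -/
open Matrix Finset

lemma key_sum (a b : ℕ → ℂ) (lam : ℂ) (i : ℕ) (h : ∀ l < i, lam + a l ≠ 0) :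
    ∑ j ∈ Finset.range i, (-1:ℂ)^(i+j) * (a j + b j) *
      ((∏ l ∈ Finset.range j, ((b l - lam)/(lam + a l))) * (1 / (lam + a j)))
    = (-1:ℂ)^i - ∏ l ∈ Finset.range i, ((b l - lam)/(lam + a l)) := by
  induction i with
  | zero => simp
  | succ n ih =>
    have hn : lam + a n ≠ 0 := h n (by omega)
    have ih' := ih (fun l hl => h l (by omega))
    rw [Finset.sum_range_succ, Finset.prod_range_succ]
    have hsgn : ∀ j : ℕ, (-1:ℂ)^(n+1+j) = (-1) * (-1:ℂ)^(n+j) := by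
      intro j
      rw [show n+1+j = (n+j)+1 by omega, pow_succ]
      ring
    have hstep : ∑ j ∈ Finset.range n, (-1:ℂ)^(n+1+j) * (a j + b j) *
        ((∏ l ∈ Finset.range j, ((b l - lam)/(lam + a l))) * (1 / (lam + a j)))
        = - ∑ j ∈ Finset.range n, (-1:ℂ)^(n+j) * (a j + b j) *
        ((∏ l ∈ Finset.range j, ((b l - lam)/(lam + a l))) * (1 / (lam + a j))) := by
      rw [← Finset.sum_neg_distrib]
      refine Finset.sum_congr rfl fun j _ => ?_
      rw [hsgn j]; ring
    rw [hstep, ih', hsgn n]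
    have h2 : (-1:ℂ)^(n+n) = 1 := by
      rw [show n+n = 2*n by omega, pow_mul]; norm_num
    rw [h2]
    have hQ : ∏ x ∈ Finset.range n, (lam + a x) ≠ 0 :=
      Finset.prod_ne_zero_iff.2 fun l hl => h l (by simpa using Nat.lt_succ_of_lt (Finset.mem_range.1 hl))
    field_simp
    ring


/-- If `λ + α_l ≠ 0` for all `l < t`, then `J_t P^{α,β}_t J_t + λ I` is
invertible and the entries of `(J_t P^{α,β}_t J_t + λ I)⁻¹ J_t 𝟙_t` are the partial products
`[∏_{l=1}^{i−1} (β_{t−l} − λ)/(λ + α_{t−l})] / (λ + α_{t−i})`. -/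
theorem shifted_P_inverse_column {t : ℕ} (ht : 0 < t)
    (α β : ℕ → ℂ) (lam : ℂ) (hlam : ∀ l < t, lam + α l ≠ 0) :
    IsUnit (Jmat t * Pmat t α β * Jmat t + lam • 1) ∧
      ∀ i : Fin t,
        ((Jmat t * Pmat t α β * Jmat t + lam • 1)⁻¹ * (Jmat t * onesCol t)) i 0 =
          (∏ l ∈ Finset.range (i : ℕ), ((β (t - 1 - l) - lam) / (lam + α (t - 1 - l)))) *
            (1 / (lam + α (t - 1 - (i : ℕ)))) := by
  set M := Jmat t * Pmat t α β * Jmat t + lam • (1 : Matrix (Fin t) (Fin t) ℂ) with hMdef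
  have hM : ∀ i j : Fin t, M i j =
      if i = j then lam + α (t - 1 - (i : ℕ))
      else if j < i then (-1:ℂ)^((i:ℕ)+(j:ℕ)) * (α (t - 1 - (j : ℕ)) + β (t - 1 - (j : ℕ)))
      else 0 := by
    intro i j
    simp only [hMdef, Matrix.add_apply, Matrix.smul_apply, Matrix.one_apply, Jmat,
      Matrix.diagonal_mul, Matrix.mul_diagonal, Pmat, Matrix.of_apply, smul_ite]
    by_cases hij : i = j
    · subst hij
      simp only [if_true, ite_self, lt_irrefl, if_pos rfl]
      have : ((-1:ℂ))^(i:ℕ) * α (t - 1 - (i:ℕ)) * (-1:ℂ)^(i:ℕ)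
          = ((-1:ℂ)^(i:ℕ))^2 * α (t - 1 - (i:ℕ)) := by ring
      rw [this, ← pow_mul, Even.neg_one_pow ⟨(i:ℕ), by ring⟩]
      simp [smul_eq_mul]
      ring
    · simp only [hij, if_false, Fin.lt_iff_val_lt_val]
      by_cases hji : (j:ℕ) < (i:ℕ)
      · simp [hji, pow_add]; ring
      · simp [hji]
  have ha : ∀ j, j < t → lam + α (t - 1 - j) ≠ 0 := fun j hj => hlam _ (by omega)
  have htri : M.BlockTriangular OrderDual.toDual := by
    intro i j hij
    have hij' : i < j := hij
    rw [hM, if_neg hij'.ne, if_neg (fun h => absurd h (lt_asymm hij'))]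
  have hdet : M.det = ∏ i : Fin t, (lam + α (t - 1 - (i : ℕ))) := by
    rw [Matrix.det_of_lowerTriangular M htri]
    exact Finset.prod_congr rfl fun i _ => by rw [hM]; simp
  have hdet0 : M.det ≠ 0 := by
    rw [hdet]
    exact Finset.prod_ne_zero_iff.2 fun i _ => ha i i.isLt
  have hunit : IsUnit M := by
    rw [Matrix.isUnit_iff_isUnit_det]
    exact isUnit_iff_ne_zero.2 hdet0
  refine ⟨hunit, ?_⟩
  -- the candidate column
  set w : Matrix (Fin t) (Fin 1) ℂ := Matrix.of fun i _ =>
    (∏ l ∈ Finset.range (i : ℕ), ((β (t - 1 - l) - lam) / (lam + α (t - 1 - l)))) *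
      (1 / (lam + α (t - 1 - (i : ℕ)))) with hw
  have hMw : M * w = Jmat t * onesCol t := by
    ext i k
    have hJ1 : (Jmat t * onesCol t) i k = (-1:ℂ) ^ (i : ℕ) := by
      simp [Jmat, onesCol, Matrix.diagonal_mul]
    rw [hJ1, Matrix.mul_apply]
    -- convert the Fin sum to a range sum
    have hsum : ∑ j : Fin t, M i j * w j k
        = ∑ j ∈ Finset.range t, (if h : j < t then M i ⟨j, h⟩ * w ⟨j, h⟩ k else 0) := by
      rw [← Fin.sum_univ_eq_sum_range]
      exact Finset.sum_congr rfl fun j _ => by simp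
    rw [hsum]
    have hsub : ∑ j ∈ Finset.range t, (if h : j < t then M i ⟨j, h⟩ * w ⟨j, h⟩ k else 0)
        = ∑ j ∈ Finset.range ((i : ℕ) + 1), (if h : j < t then M i ⟨j, h⟩ * w ⟨j, h⟩ k else 0) := by
      refine (Finset.sum_subset (by simp [Finset.range_subset]; omega) ?_).symm
      intro j hjt hji
      simp only [Finset.mem_range] at hjt hji
      rw [dif_pos hjt, hM]
      have h1 : ¬ (i = (⟨j, hjt⟩ : Fin t)) := by
        intro hh
        have := congrArg Fin.val hh
        simp at this; omega
      have h2 : ¬ ((⟨j, hjt⟩ : Fin t) < i) := by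
        simp [Fin.lt_iff_val_lt_val]; omega
      simp [h1, h2]
    rw [hsub, Finset.sum_range_succ, dif_pos i.isLt]
    have hdiag : M i ⟨(i:ℕ), i.isLt⟩ * w ⟨(i:ℕ), i.isLt⟩ k
        = ∏ l ∈ Finset.range (i : ℕ), ((β (t - 1 - l) - lam) / (lam + α (t - 1 - l))) := by
      rw [hM]
      simp only [hw, Matrix.of_apply, Fin.eta, eq_self_iff_true, if_true]
      rw [one_div, mul_comm (lam + α (t - 1 - (i:ℕ))), mul_assoc,
        inv_mul_cancel₀ (ha (i:ℕ) i.isLt), mul_one]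
    have hoff : ∑ j ∈ Finset.range (i : ℕ), (if h : j < t then M i ⟨j, h⟩ * w ⟨j, h⟩ k else 0)
        = ∑ j ∈ Finset.range (i : ℕ), (-1:ℂ)^((i:ℕ)+j) * (α (t-1-j) + β (t-1-j)) *
          ((∏ l ∈ Finset.range j, ((β (t - 1 - l) - lam)/(lam + α (t - 1 - l)))) *
            (1 / (lam + α (t - 1 - j)))) := by
      refine Finset.sum_congr rfl fun j hj => ?_
      simp only [Finset.mem_range] at hj
      have hjt : j < t := lt_trans hj i.isLt
      rw [dif_pos hjt, hM]
      have h1 : ¬ (i = (⟨j, hjt⟩ : Fin t)) := by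
        intro hh
        have := congrArg Fin.val hh
        simp at this; omega
      have h2 : ((⟨j, hjt⟩ : Fin t) < i) := by
        simp [Fin.lt_iff_val_lt_val]; omega
      simp only [h1, if_false, h2, if_true, hw, Matrix.of_apply]
    rw [hdiag, hoff,
      key_sum (fun j => α (t-1-j)) (fun j => β (t-1-j)) lam (i:ℕ)
        (fun l hl => ha l (lt_trans hl i.isLt))]
    ring
  have hinv : M⁻¹ * (Jmat t * onesCol t) = w := by
    rw [← hMw, ← Matrix.mul_assoc, Matrix.nonsing_inv_mul M hdet0.isUnit, Matrix.one_mul]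
  intro i
  rw [hinv, hw]
  simp
end

section
/- Let A ∈ ℝ^{m×m} and L ∈ ℝ^{m×p} be real, and let β ∈ ℂ with Im β ≠ 0 be such that A + βI is invertible as a complex matrix. Write (A + βI)^{−1} L = L_Re + i·L_Im with L_Re, L_Im real m×p matrices. Then A + β̄I is also invertible, and (A + βI)^{−1}(A + β̄I)^{−1} L = −(1/Im β) · L_Im; in particular this matrix is real. -/
open Matrix

/-- For real `A`, `L` and a nonreal shift `β` with `A + βI` invertible,
writing `(A + βI)⁻¹ L = L_Re + i·L_Im` with real `L_Re, L_Im`, the matrix `A + β̄I` is also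
invertible and `(A + βI)⁻¹ (A + β̄I)⁻¹ L = −(1/Im β)·L_Im`; in particular it is real. -/
theorem conjugate_shift_real_arithmetic {m p : ℕ} (hm : 0 < m) (hp : 0 < p)
    (A : Matrix (Fin m) (Fin m) ℝ) (L : Matrix (Fin m) (Fin p) ℝ)
    (β : ℂ) (hβ : β.im ≠ 0)
    (hinv : IsUnit (A.map (Complex.ofReal) + β • 1))
    (LRe LIm : Matrix (Fin m) (Fin p) ℝ)
    (hdecomp : (A.map (Complex.ofReal) + β • 1)⁻¹ * L.map (Complex.ofReal) =
      LRe.map (Complex.ofReal) + Complex.I • LIm.map (Complex.ofReal)) :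
    IsUnit (A.map (Complex.ofReal) + (starRingEnd ℂ β) • 1) ∧
      (A.map (Complex.ofReal) + β • 1)⁻¹ * (A.map (Complex.ofReal) + (starRingEnd ℂ β) • 1)⁻¹ *
          L.map (Complex.ofReal) =
        ((-(1 / β.im) : ℝ) : ℂ) • LIm.map (Complex.ofReal) := by
  set φ := starRingEnd ℂ with hφ
  set B := A.map (Complex.ofReal) + β • 1 with hB
  set C := A.map (Complex.ofReal) + φ β • 1 with hC
  -- conjugation of B is C
  have hmapB : B.map φ = C := by
    ext i j
    simp [hB, hC, hφ, Matrix.map_apply, Matrix.one_apply, apply_ite (starRingEnd ℂ),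
      Matrix.add_apply, Matrix.smul_apply, Complex.conj_ofReal]
  -- C is a unit
  have hdetB : IsUnit B.det := (Matrix.isUnit_iff_isUnit_det B).mp hinv
  have hdetC : IsUnit C.det := by
    rw [← hmapB]
    simpa [← RingHom.mapMatrix_apply, ← RingHom.map_det] using hdetB.map φ
  have hCunit : IsUnit C := (Matrix.isUnit_iff_isUnit_det C).mpr hdetC
  refine ⟨hCunit, ?_⟩
  set L' := L.map (Complex.ofReal) with hL'
  set R := LRe.map (Complex.ofReal) with hR
  set Im' := LIm.map (Complex.ofReal) with hIm'
  -- map φ of real matrices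
  have hmapL : L'.map φ = L' := by ext i j; simp [hL', hφ, Matrix.map_apply, Complex.conj_ofReal]
  have hmapR : R.map φ = R := by ext i j; simp [hR, hφ, Matrix.map_apply, Complex.conj_ofReal]
  have hmapIm : Im'.map φ = Im' := by ext i j; simp [hIm', hφ, Matrix.map_apply, Complex.conj_ofReal]
  -- L' = B * (R + I • Im')
  have h1 : L' = B * (R + Complex.I • Im') := by
    have := congrArg (fun M => B * M) hdecomp
    simpa [← Matrix.mul_assoc, Matrix.mul_nonsing_inv B hdetB] using this
  -- conjugate: L' = C * (R - I • Im')
  have h2 : L' = C * (R - Complex.I • Im') := by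
    have := congrArg (fun M => M.map φ) h1
    simp only [Matrix.map_mul, hmapB, hmapL] at this
    rw [this]
    congr 1
    ext i j
    simp [Matrix.map_apply, Matrix.add_apply, Matrix.sub_apply, Matrix.smul_apply, hR, hIm',
      hφ, Complex.conj_ofReal, Complex.conj_I]
    ring
  have hCinvL : C⁻¹ * L' = R - Complex.I • Im' := by
    rw [h2, ← Matrix.mul_assoc, Matrix.nonsing_inv_mul C hdetC, Matrix.one_mul]
  -- resolvent identity
  have hdiff : C - B = (φ β - β) • 1 := by
    rw [hB, hC, sub_smul]; abel
  have key : B⁻¹ * C⁻¹ = (φ β - β)⁻¹ • (B⁻¹ - C⁻¹) := by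
    have h3 : B⁻¹ - C⁻¹ = B⁻¹ * (C - B) * C⁻¹ := by
      rw [Matrix.mul_sub, Matrix.sub_mul]
      rw [Matrix.mul_assoc B⁻¹ C C⁻¹, Matrix.mul_nonsing_inv C hdetC,
        Matrix.nonsing_inv_mul B hdetB, Matrix.mul_one, Matrix.one_mul]
    have h4 : B⁻¹ - C⁻¹ = (φ β - β) • (B⁻¹ * C⁻¹) := by
      rw [h3, hdiff]
      rw [Matrix.mul_smul, Matrix.smul_mul, Matrix.mul_one]
    have hne : φ β - β ≠ 0 := by
      simp only [hφ, sub_ne_zero]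
      intro h
      have := congrArg Complex.im h
      simp [Complex.conj_im] at this
      exact hβ (by linarith)
    rw [h4, smul_smul, inv_mul_cancel₀ hne, one_smul]
  rw [key, Matrix.smul_mul, Matrix.sub_mul, hdecomp, hCinvL]
  have : (R + Complex.I • Im') - (R - Complex.I • Im') = (2 * Complex.I) • Im' := by
    ext i j
    simp [Matrix.add_apply, Matrix.sub_apply, Matrix.smul_apply]
    ring
  rw [this, smul_smul]
  congr 1
  have hd : φ β - β = (-(2 * β.im) : ℝ) * Complex.I := by
    apply Complex.ext <;> simp [hφ, Complex.conj_im] <;> ring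
  rw [hd]
  have hb : (β.im : ℂ) ≠ 0 := by exact_mod_cast hβ
  rw [mul_inv, Complex.inv_I]
  push_cast
  field_simp
  have h2 : Complex.I * (2 * Complex.I) = -2 := by
    rw [show Complex.I * (2 * Complex.I) = 2 * (Complex.I * Complex.I) by ring,
      Complex.I_mul_I]; ring
  exact Complex.I_sq
end

section
/- The block matrices T^D_t and T^A_t 'commute' with the shift-structure matrices in the following sense: (Ω_t J_t P^{α,β}_t J_t Ω_t^{−1} ⊗ I_p) · T^D_t = T^D_t · (Ω_t J_t P^{α,β}_t J_t Ω_t^{−1} ⊗ I_q), and (J_t (P^{β,α}_t)^T J_t ⊗ I_q) · T^A_t = T^A_t · (J_t (P^{β,α}_t)^T J_t ⊗ I_p). -/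
open Matrix Kronecker

/-- If a matrix commutes with `B`, it commutes with `B⁻¹`. -/
lemma commute_nonsing_inv {N : Type*} [Fintype N] [DecidableEq N]
    {A B : Matrix N N ℂ} (h : A * B = B * A) : A * B⁻¹ = B⁻¹ * A := by
  by_cases hB : IsUnit B.det
  · calc A * B⁻¹ = B⁻¹ * B * (A * B⁻¹) := by rw [Matrix.nonsing_inv_mul _ hB, one_mul]
      _ = B⁻¹ * (B * A) * B⁻¹ := by simp only [mul_assoc]
      _ = B⁻¹ * (A * B) * B⁻¹ := by rw [h]
      _ = B⁻¹ * A * (B * B⁻¹) := by simp only [mul_assoc]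
      _ = B⁻¹ * A := by rw [Matrix.mul_nonsing_inv _ hB, mul_one]
  · rw [Matrix.nonsing_inv_apply_not_isUnit _ hB, mul_zero, zero_mul]

/-- The intertwining (commutation) identities for `T^D_t` and `T^A_t` with
the shift-structure matrices. -/
theorem TD_TA_commute_with_shift_structure {m n p q t : ℕ}
    (hm : 0 < m) (hn : 0 < n) (hp : 0 < p) (hq : 0 < q) (ht : 0 < t)
    (A : Matrix (Fin m) (Fin m) ℂ) (D : Matrix (Fin n) (Fin n) ℂ)
    (LB : Matrix (Fin m) (Fin p) ℂ) (RB : Matrix (Fin p) (Fin n) ℂ)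
    (LC : Matrix (Fin n) (Fin q) ℂ) (RC : Matrix (Fin q) (Fin m) ℂ)
    (α β : ℕ → ℂ)
    (hshift : ∀ l < t, α l + β l ≠ 0 ∧
      IsUnit (α l • (1 : Matrix (Fin n) (Fin n) ℂ) + D) ∧
      IsUnit (β l • (1 : Matrix (Fin m) (Fin m) ℂ) + A))
    (KD : Matrix (Fin t × Fin n) (Fin t × Fin n) ℂ)
    (hKD : KD = ((Jmat t * Pmat t α β * Jmat t) ⊗ₖ (1 : Matrix (Fin n) (Fin n) ℂ) +
      (1 : Matrix (Fin t) (Fin t) ℂ) ⊗ₖ D)⁻¹)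
    (KA : Matrix (Fin t × Fin m) (Fin t × Fin m) ℂ)
    (hKA : KA = ((Jmat t * Pmat t β α * Jmat t) ⊗ₖ (1 : Matrix (Fin m) (Fin m) ℂ) +
      (1 : Matrix (Fin t) (Fin t) ℂ) ⊗ₖ Aᵀ)⁻¹)
    (TD : Matrix (Fin t × Fin p) (Fin t × Fin q) ℂ)
    (hTD : TD = ((Omat t α β) ⊗ₖ RB) * KD * ((Omat t α β)⁻¹ ⊗ₖ LC))
    (TA : Matrix (Fin t × Fin q) (Fin t × Fin p) ℂ)
    (hTA : TA = ((1 : Matrix (Fin t) (Fin t) ℂ) ⊗ₖ RC) * KAᵀ *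
      ((1 : Matrix (Fin t) (Fin t) ℂ) ⊗ₖ LB)) :
    ((Omat t α β * Jmat t * Pmat t α β * Jmat t * (Omat t α β)⁻¹) ⊗ₖ
        (1 : Matrix (Fin p) (Fin p) ℂ)) * TD =
      TD * ((Omat t α β * Jmat t * Pmat t α β * Jmat t * (Omat t α β)⁻¹) ⊗ₖ
        (1 : Matrix (Fin q) (Fin q) ℂ)) ∧
    ((Jmat t * (Pmat t β α)ᵀ * Jmat t) ⊗ₖ (1 : Matrix (Fin q) (Fin q) ℂ)) * TA =
      TA * ((Jmat t * (Pmat t β α)ᵀ * Jmat t) ⊗ₖ (1 : Matrix (Fin p) (Fin p) ℂ)) := by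
  set Ω := Omat t α β with hΩ
  set S := Jmat t * Pmat t α β * Jmat t with hS
  set S' := Jmat t * Pmat t β α * Jmat t with hS'
  -- Ω is invertible
  have hdet : IsUnit Ω.det := by
    rw [hΩ, Omat, Matrix.det_diagonal]
    refine isUnit_iff_ne_zero.mpr (Finset.prod_ne_zero_iff.mpr fun i _ => ?_)
    exact (hshift _ (by omega)).1
  have hΩinv : Ω⁻¹ * Ω = 1 := Matrix.nonsing_inv_mul _ hdet
  constructor
  · -- first identity
    have hcommD : (S ⊗ₖ (1 : Matrix (Fin n) (Fin n) ℂ)) * KD =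
        KD * (S ⊗ₖ (1 : Matrix (Fin n) (Fin n) ℂ)) := by
      rw [hKD]
      apply commute_nonsing_inv
      simp only [mul_add, add_mul, ← Matrix.mul_kronecker_mul, Matrix.one_mul,
        Matrix.mul_one]
    have h1 : ((Ω * Jmat t * Pmat t α β * Jmat t * Ω⁻¹) ⊗ₖ
        (1 : Matrix (Fin p) (Fin p) ℂ)) * (Ω ⊗ₖ RB) =
        (Ω ⊗ₖ RB) * (S ⊗ₖ (1 : Matrix (Fin n) (Fin n) ℂ)) := by
      have e1 : Ω * Jmat t * Pmat t α β * Jmat t * Ω⁻¹ * Ω = Ω * S := by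
        rw [mul_assoc _ Ω⁻¹ Ω, hΩinv, mul_one, hS]
        simp only [mul_assoc]
      rw [← Matrix.mul_kronecker_mul, ← Matrix.mul_kronecker_mul,
        Matrix.one_mul, Matrix.mul_one, e1]
    have h2 : (S ⊗ₖ (1 : Matrix (Fin n) (Fin n) ℂ)) * (Ω⁻¹ ⊗ₖ LC) =
        (Ω⁻¹ ⊗ₖ LC) * ((Ω * Jmat t * Pmat t α β * Jmat t * Ω⁻¹) ⊗ₖ
        (1 : Matrix (Fin q) (Fin q) ℂ)) := by
      have e2 : S * Ω⁻¹ = Ω⁻¹ * (Ω * Jmat t * Pmat t α β * Jmat t * Ω⁻¹) := by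
        rw [hS]
        simp only [mul_assoc]
        rw [← mul_assoc Ω⁻¹ Ω, hΩinv, one_mul]
      rw [← Matrix.mul_kronecker_mul, ← Matrix.mul_kronecker_mul,
        Matrix.one_mul, Matrix.mul_one, e2]
    rw [hTD]
    calc ((Ω * Jmat t * Pmat t α β * Jmat t * Ω⁻¹) ⊗ₖ (1 : Matrix (Fin p) (Fin p) ℂ)) *
          ((Ω ⊗ₖ RB) * KD * (Ω⁻¹ ⊗ₖ LC))
        = ((Ω * Jmat t * Pmat t α β * Jmat t * Ω⁻¹) ⊗ₖ (1 : Matrix (Fin p) (Fin p) ℂ)) *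
          (Ω ⊗ₖ RB) * KD * (Ω⁻¹ ⊗ₖ LC) := by
          rw [← Matrix.mul_assoc, ← Matrix.mul_assoc]
      _ = (Ω ⊗ₖ RB) * (S ⊗ₖ (1 : Matrix (Fin n) (Fin n) ℂ)) * KD * (Ω⁻¹ ⊗ₖ LC) := by rw [h1]
      _ = (Ω ⊗ₖ RB) * ((S ⊗ₖ (1 : Matrix (Fin n) (Fin n) ℂ)) * KD) * (Ω⁻¹ ⊗ₖ LC) := by
          rw [Matrix.mul_assoc (Ω ⊗ₖ RB)]
      _ = (Ω ⊗ₖ RB) * (KD * (S ⊗ₖ (1 : Matrix (Fin n) (Fin n) ℂ))) * (Ω⁻¹ ⊗ₖ LC) := by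
          rw [hcommD]
      _ = (Ω ⊗ₖ RB) * KD * ((S ⊗ₖ (1 : Matrix (Fin n) (Fin n) ℂ)) * (Ω⁻¹ ⊗ₖ LC)) := by
          rw [← Matrix.mul_assoc, Matrix.mul_assoc ((Ω ⊗ₖ RB) * KD)]
      _ = (Ω ⊗ₖ RB) * KD * (Ω⁻¹ ⊗ₖ LC) *
          ((Ω * Jmat t * Pmat t α β * Jmat t * Ω⁻¹) ⊗ₖ (1 : Matrix (Fin q) (Fin q) ℂ)) := by
          rw [h2, ← Matrix.mul_assoc]
  · -- second identity
    have hJT : (Jmat t)ᵀ = Jmat t := Matrix.diagonal_transpose _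
    have hSt : Jmat t * (Pmat t β α)ᵀ * Jmat t = S'ᵀ := by
      rw [hS', Matrix.transpose_mul, Matrix.transpose_mul, hJT, mul_assoc]
    have hKAT : KAᵀ = (S'ᵀ ⊗ₖ (1 : Matrix (Fin m) (Fin m) ℂ) +
        (1 : Matrix (Fin t) (Fin t) ℂ) ⊗ₖ A)⁻¹ := by
      rw [hKA, Matrix.transpose_nonsing_inv]
      congr 1
      rw [Matrix.transpose_add, ← Matrix.kroneckerMap_transpose, ← Matrix.kroneckerMap_transpose,
        Matrix.transpose_one, Matrix.transpose_one, Matrix.transpose_transpose]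
    have hcommA : (S'ᵀ ⊗ₖ (1 : Matrix (Fin m) (Fin m) ℂ)) * KAᵀ =
        KAᵀ * (S'ᵀ ⊗ₖ (1 : Matrix (Fin m) (Fin m) ℂ)) := by
      rw [hKAT]
      apply commute_nonsing_inv
      simp only [mul_add, add_mul, ← Matrix.mul_kronecker_mul, Matrix.one_mul,
        Matrix.mul_one]
    have h1 : (S'ᵀ ⊗ₖ (1 : Matrix (Fin q) (Fin q) ℂ)) *
        ((1 : Matrix (Fin t) (Fin t) ℂ) ⊗ₖ RC) =
        ((1 : Matrix (Fin t) (Fin t) ℂ) ⊗ₖ RC) *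
        (S'ᵀ ⊗ₖ (1 : Matrix (Fin m) (Fin m) ℂ)) := by
      simp only [← Matrix.mul_kronecker_mul, Matrix.one_mul, Matrix.mul_one]
    have h2 : (S'ᵀ ⊗ₖ (1 : Matrix (Fin m) (Fin m) ℂ)) *
        ((1 : Matrix (Fin t) (Fin t) ℂ) ⊗ₖ LB) =
        ((1 : Matrix (Fin t) (Fin t) ℂ) ⊗ₖ LB) *
        (S'ᵀ ⊗ₖ (1 : Matrix (Fin p) (Fin p) ℂ)) := by
      simp only [← Matrix.mul_kronecker_mul, Matrix.one_mul, Matrix.mul_one]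
    rw [hTA, hSt]
    calc (S'ᵀ ⊗ₖ (1 : Matrix (Fin q) (Fin q) ℂ)) *
          (((1 : Matrix (Fin t) (Fin t) ℂ) ⊗ₖ RC) * KAᵀ * ((1 : Matrix (Fin t) (Fin t) ℂ) ⊗ₖ LB))
        = (S'ᵀ ⊗ₖ (1 : Matrix (Fin q) (Fin q) ℂ)) * ((1 : Matrix (Fin t) (Fin t) ℂ) ⊗ₖ RC) *
          KAᵀ * ((1 : Matrix (Fin t) (Fin t) ℂ) ⊗ₖ LB) := by
          rw [← Matrix.mul_assoc, ← Matrix.mul_assoc]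
      _ = ((1 : Matrix (Fin t) (Fin t) ℂ) ⊗ₖ RC) * (S'ᵀ ⊗ₖ (1 : Matrix (Fin m) (Fin m) ℂ)) *
          KAᵀ * ((1 : Matrix (Fin t) (Fin t) ℂ) ⊗ₖ LB) := by rw [h1]
      _ = ((1 : Matrix (Fin t) (Fin t) ℂ) ⊗ₖ RC) *
          ((S'ᵀ ⊗ₖ (1 : Matrix (Fin m) (Fin m) ℂ)) * KAᵀ) *
          ((1 : Matrix (Fin t) (Fin t) ℂ) ⊗ₖ LB) := by
          rw [Matrix.mul_assoc (((1 : Matrix (Fin t) (Fin t) ℂ) ⊗ₖ RC))]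
      _ = ((1 : Matrix (Fin t) (Fin t) ℂ) ⊗ₖ RC) *
          (KAᵀ * (S'ᵀ ⊗ₖ (1 : Matrix (Fin m) (Fin m) ℂ))) *
          ((1 : Matrix (Fin t) (Fin t) ℂ) ⊗ₖ LB) := by rw [hcommA]
      _ = ((1 : Matrix (Fin t) (Fin t) ℂ) ⊗ₖ RC) * KAᵀ *
          ((S'ᵀ ⊗ₖ (1 : Matrix (Fin m) (Fin m) ℂ)) * ((1 : Matrix (Fin t) (Fin t) ℂ) ⊗ₖ LB)) := by
          rw [← Matrix.mul_assoc, Matrix.mul_assoc (((1 : Matrix (Fin t) (Fin t) ℂ) ⊗ₖ RC) * KAᵀ)]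
      _ = ((1 : Matrix (Fin t) (Fin t) ℂ) ⊗ₖ RC) * KAᵀ * ((1 : Matrix (Fin t) (Fin t) ℂ) ⊗ₖ LB) *
          (S'ᵀ ⊗ₖ (1 : Matrix (Fin p) (Fin p) ℂ)) := by rw [h2, ← Matrix.mul_assoc]
end

section
/- The block matrices V^D_t and U^A_t satisfy the resolvent identities V^D_t · D = (Ω_t J_t 𝟙_t ⊗ I_p) · R^B − (Ω_t J_t P^{α,β}_t J_t Ω_t^{−1} ⊗ I_p) · V^D_t and A · U^A_t = L^B · (𝟙_t^T J_t ⊗ I_p) − U^A_t · (J_t (P^{β,α}_t)^T J_t ⊗ I_p). -/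
open Matrix Kronecker

def blockEquiv (t n : ℕ) (a : Fin t) : {p : Fin t × Fin n // p.1 = a} ≃ Fin n where
  toFun p := p.1.2
  invFun x := ⟨(a, x), rfl⟩
  left_inv := by rintro ⟨⟨i, x⟩, rfl⟩; rfl
  right_inv x := rfl

lemma aux_isUnit_det_kron {n t : ℕ} (S : Matrix (Fin t) (Fin t) ℂ)
    (D : Matrix (Fin n) (Fin n) ℂ)
    (hS : ∀ i j : Fin t, j < i → S i j = 0)
    (hD : ∀ i : Fin t, IsUnit (S i i • (1 : Matrix (Fin n) (Fin n) ℂ) + D)) :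
    IsUnit (S ⊗ₖ (1 : Matrix (Fin n) (Fin n) ℂ) +
      (1 : Matrix (Fin t) (Fin t) ℂ) ⊗ₖ D).det := by
  set M : Matrix (Fin t × Fin n) (Fin t × Fin n) ℂ :=
    S ⊗ₖ (1 : Matrix (Fin n) (Fin n) ℂ) + (1 : Matrix (Fin t) (Fin t) ℂ) ⊗ₖ D with hM
  have hBT : M.BlockTriangular Prod.fst := by
    rintro ⟨i, x⟩ ⟨j, y⟩ h
    simp only [hM, Matrix.add_apply, Matrix.kroneckerMap_apply]
    rw [hS i j h, Matrix.one_apply_ne (ne_of_gt h)]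
    ring
  rw [hBT.det, isUnit_iff_ne_zero, Finset.prod_ne_zero_iff]
  intro a _
  have hblock : M.toSquareBlock Prod.fst a =
      (S a a • (1 : Matrix (Fin n) (Fin n) ℂ) + D).submatrix (blockEquiv t n a) (blockEquiv t n a) := by
    ext ⟨⟨i, x⟩, hi⟩ ⟨⟨j, y⟩, hj⟩
    simp only [Matrix.toSquareBlock_def, hM, Matrix.of_apply, Matrix.add_apply,
      Matrix.kroneckerMap_apply, Matrix.submatrix_apply, Matrix.add_apply,
      Matrix.smul_apply, smul_eq_mul, blockEquiv, Equiv.coe_fn_mk]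
    simp only [show i = a from hi, show j = a from hj, Matrix.one_apply_eq, one_mul]
    have hij : i = j := (show i = a from hi).trans (show j = a from hj).symm
    simp [Matrix.one_apply, mul_comm, hij]
  rw [hblock, Matrix.det_submatrix_equiv_self]
  exact (isUnit_iff_ne_zero).mp ((Matrix.isUnit_iff_isUnit_det _).mp (hD a))

lemma aux_sub_left {a b c d : Type*} [Fintype b] (B : Matrix a b ℂ) (X : Matrix b c ℂ) (f : d → c) :
    (B * X).submatrix id f = B * X.submatrix id f := by
  ext i j; simp [Matrix.mul_apply]

lemma aux_sub_right {a b c d : Type*} [Fintype b] (X : Matrix a b ℂ) (B : Matrix b c ℂ) (f : d → a) :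
    (X * B).submatrix f id = X.submatrix f id * B := by
  ext i j; simp [Matrix.mul_apply]

lemma aux_sub_colD {a : Type*} {b : Type*} [Fintype b] [DecidableEq b]
    (X : Matrix a (Fin 1 × b) ℂ) (D : Matrix b b ℂ) :
    X.submatrix id (fun j => ((0 : Fin 1), j)) * D
      = (X * ((1 : Matrix (Fin 1) (Fin 1) ℂ) ⊗ₖ D)).submatrix id (fun j => ((0 : Fin 1), j)) := by
  ext i j
  simp [Matrix.mul_apply, Fintype.sum_prod_type, Matrix.one_apply, Fin.sum_univ_one]

lemma aux_sub_rowA {b c : Type*} [Fintype b] [DecidableEq b]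
    (A : Matrix b b ℂ) (X : Matrix (Fin 1 × b) c ℂ) :
    A * X.submatrix (fun i => ((0 : Fin 1), i)) id
      = (((1 : Matrix (Fin 1) (Fin 1) ℂ) ⊗ₖ A) * X).submatrix (fun i => ((0 : Fin 1), i)) id := by
  ext i j
  simp [Matrix.mul_apply, Fintype.sum_prod_type, Matrix.one_apply, Fin.sum_univ_one]

lemma aux_inv_comm {k : Type*} [Fintype k] [DecidableEq k]
    (M X : Matrix k k ℂ) (h : IsUnit M.det) (hc : M * X = X * M) :
    M⁻¹ * X = X * M⁻¹ := by
  calc M⁻¹ * X = M⁻¹ * X * (M * M⁻¹) := by rw [Matrix.mul_nonsing_inv _ h, Matrix.mul_one]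
    _ = M⁻¹ * (X * M) * M⁻¹ := by simp only [Matrix.mul_assoc]
    _ = M⁻¹ * (M * X) * M⁻¹ := by rw [hc]
    _ = (M⁻¹ * M) * (X * M⁻¹) := by simp only [Matrix.mul_assoc]
    _ = X * M⁻¹ := by rw [Matrix.nonsing_inv_mul _ h, Matrix.one_mul]

lemma aux_sub_sub {a b c d : Type*} (A B : Matrix a b ℂ) (f : c → a) (g : d → b) :
    (A - B).submatrix f g = A.submatrix f g - B.submatrix f g := rfl

lemma aux_isUnit_transpose {k : Type*} [Fintype k] [DecidableEq k]
    (X : Matrix k k ℂ) (h : IsUnit X) : IsUnit Xᵀ := by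
  rw [Matrix.isUnit_iff_isUnit_det, Matrix.det_transpose, ← Matrix.isUnit_iff_isUnit_det]
  exact h

lemma Pmat_upper (t : ℕ) (α β : ℕ → ℂ) {i j : Fin t} (h : i < j) : Pmat t α β i j = 0 := by
  simp only [Pmat, Matrix.of_apply, if_neg h.ne, if_neg (lt_asymm h)]

lemma Pmat_diag (t : ℕ) (α β : ℕ → ℂ) (i : Fin t) :
    Pmat t α β i i = α (t - 1 - (i : ℕ)) := by
  simp [Pmat]

lemma JXJ_apply {t : ℕ} (X : Matrix (Fin t) (Fin t) ℂ) (i j : Fin t) :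
    (Jmat t * X * Jmat t) i j = (-1 : ℂ) ^ ((i : ℕ) + (j : ℕ)) * X i j := by
  simp only [Jmat, Matrix.mul_diagonal, Matrix.diagonal_mul, pow_add]
  ring

lemma JXJ_diag {t : ℕ} (X : Matrix (Fin t) (Fin t) ℂ) (i : Fin t) :
    (Jmat t * X * Jmat t) i i = X i i := by
  rw [JXJ_apply, Even.neg_one_pow ⟨i, rfl⟩, one_mul]


/-- The resolvent identities
`V^D_t D = (Ω_t J_t 𝟙_t ⊗ I_p) R^B − (Ω_t J_t P^{α,β}_t J_t Ω_t⁻¹ ⊗ I_p) V^D_t` and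
`A U^A_t = L^B (𝟙_tᵀ J_t ⊗ I_p) − U^A_t (J_t (P^{β,α}_t)ᵀ J_t ⊗ I_p)`. -/
theorem VD_UA_resolvent_identities {m n p t : ℕ}
    (hm : 0 < m) (hn : 0 < n) (hp : 0 < p) (ht : 0 < t)
    (A : Matrix (Fin m) (Fin m) ℂ) (D : Matrix (Fin n) (Fin n) ℂ)
    (LB : Matrix (Fin m) (Fin p) ℂ) (RB : Matrix (Fin p) (Fin n) ℂ)
    (α β : ℕ → ℂ)
    (hshift : ∀ l < t, α l + β l ≠ 0 ∧
      IsUnit (α l • (1 : Matrix (Fin n) (Fin n) ℂ) + D) ∧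
      IsUnit (β l • (1 : Matrix (Fin m) (Fin m) ℂ) + A))
    (KD : Matrix (Fin t × Fin n) (Fin t × Fin n) ℂ)
    (hKD : KD = ((Jmat t * Pmat t α β * Jmat t) ⊗ₖ (1 : Matrix (Fin n) (Fin n) ℂ) +
      (1 : Matrix (Fin t) (Fin t) ℂ) ⊗ₖ D)⁻¹)
    (KA : Matrix (Fin t × Fin m) (Fin t × Fin m) ℂ)
    (hKA : KA = ((Jmat t * Pmat t β α * Jmat t) ⊗ₖ (1 : Matrix (Fin m) (Fin m) ℂ) +
      (1 : Matrix (Fin t) (Fin t) ℂ) ⊗ₖ Aᵀ)⁻¹)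
    (VD : Matrix (Fin t × Fin p) (Fin n) ℂ)
    (hVD : VD = (((Omat t α β) ⊗ₖ RB) * KD *
      ((Jmat t * onesCol t) ⊗ₖ (1 : Matrix (Fin n) (Fin n) ℂ))).submatrix id
        (fun j => ((0 : Fin 1), j)))
    (UA : Matrix (Fin m) (Fin t × Fin p) ℂ)
    (hUA : UA = ((((onesCol t)ᵀ * Jmat t) ⊗ₖ (1 : Matrix (Fin m) (Fin m) ℂ)) * KAᵀ *
      ((1 : Matrix (Fin t) (Fin t) ℂ) ⊗ₖ LB)).submatrix (fun i => ((0 : Fin 1), i)) id) :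
    VD * D = ((Omat t α β * Jmat t * onesCol t) ⊗ₖ RB).submatrix id (fun j => ((0 : Fin 1), j)) -
        ((Omat t α β * Jmat t * Pmat t α β * Jmat t * (Omat t α β)⁻¹) ⊗ₖ
          (1 : Matrix (Fin p) (Fin p) ℂ)) * VD ∧
      A * UA = (((onesCol t)ᵀ * Jmat t) ⊗ₖ LB).submatrix (fun i => ((0 : Fin 1), i)) id -
        UA * ((Jmat t * (Pmat t β α)ᵀ * Jmat t) ⊗ₖ (1 : Matrix (Fin p) (Fin p) ℂ)) := by
  have htsub : ∀ i : Fin t, t - 1 - (i : ℕ) < t := fun i => by omega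
  have hΩdet : IsUnit (Omat t α β).det := by
    rw [Omat, Matrix.det_diagonal, isUnit_iff_ne_zero]
    exact Finset.prod_ne_zero_iff.mpr fun i _ => (hshift _ (htsub i)).1
  have hΩinv : (Omat t α β)⁻¹ * Omat t α β = 1 := Matrix.nonsing_inv_mul _ hΩdet
  constructor
  · -- Part 1
    have hSlow : ∀ i j : Fin t, i < j → (Jmat t * Pmat t α β * Jmat t) i j = 0 := by
      intro i j h; rw [JXJ_apply, Pmat_upper t α β h, mul_zero]
    have hMdet : IsUnit ((Jmat t * Pmat t α β * Jmat t) ⊗ₖ (1 : Matrix (Fin n) (Fin n) ℂ) +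
        (1 : Matrix (Fin t) (Fin t) ℂ) ⊗ₖ D).det := by
      rw [← Matrix.det_transpose, Matrix.transpose_add, ← Matrix.kroneckerMap_transpose,
        ← Matrix.kroneckerMap_transpose, Matrix.transpose_one, Matrix.transpose_one]
      refine aux_isUnit_det_kron _ _ (fun i j h => ?_) (fun i => ?_)
      · rw [Matrix.transpose_apply]; exact hSlow j i h
      · rw [Matrix.transpose_apply, JXJ_diag, Pmat_diag]
        have h2 := aux_isUnit_transpose _ (hshift _ (htsub i)).2.1
        rwa [Matrix.transpose_add, Matrix.transpose_smul, Matrix.transpose_one] at h2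
    have hKM : KD * ((Jmat t * Pmat t α β * Jmat t) ⊗ₖ (1 : Matrix (Fin n) (Fin n) ℂ) +
        (1 : Matrix (Fin t) (Fin t) ℂ) ⊗ₖ D) = 1 := by
      rw [hKD]; exact Matrix.nonsing_inv_mul _ hMdet
    have hcommK : KD * ((Jmat t * Pmat t α β * Jmat t) ⊗ₖ (1 : Matrix (Fin n) (Fin n) ℂ))
        = ((Jmat t * Pmat t α β * Jmat t) ⊗ₖ (1 : Matrix (Fin n) (Fin n) ℂ)) * KD := by
      rw [hKD]
      apply aux_inv_comm _ _ hMdet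
      simp only [add_mul, mul_add, ← Matrix.mul_kronecker_mul, Matrix.one_mul, Matrix.mul_one]
    have swap1 : ((Jmat t * onesCol t) ⊗ₖ (1 : Matrix (Fin n) (Fin n) ℂ)) *
        ((1 : Matrix (Fin 1) (Fin 1) ℂ) ⊗ₖ D)
        = ((1 : Matrix (Fin t) (Fin t) ℂ) ⊗ₖ D) *
          ((Jmat t * onesCol t) ⊗ₖ (1 : Matrix (Fin n) (Fin n) ℂ)) := by
      simp only [← Matrix.mul_kronecker_mul, Matrix.one_mul, Matrix.mul_one]
    have hsplit : (1 : Matrix (Fin t) (Fin t) ℂ) ⊗ₖ D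
        = ((Jmat t * Pmat t α β * Jmat t) ⊗ₖ (1 : Matrix (Fin n) (Fin n) ℂ) +
          (1 : Matrix (Fin t) (Fin t) ℂ) ⊗ₖ D)
          - (Jmat t * Pmat t α β * Jmat t) ⊗ₖ (1 : Matrix (Fin n) (Fin n) ℂ) := by
      rw [add_sub_cancel_left]
    have hQ : ((Omat t α β * Jmat t * Pmat t α β * Jmat t * (Omat t α β)⁻¹) ⊗ₖ
          (1 : Matrix (Fin p) (Fin p) ℂ)) * ((Omat t α β) ⊗ₖ RB)
        = ((Omat t α β) ⊗ₖ RB) *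
          ((Jmat t * Pmat t α β * Jmat t) ⊗ₖ (1 : Matrix (Fin n) (Fin n) ℂ)) := by
      rw [← Matrix.mul_kronecker_mul, ← Matrix.mul_kronecker_mul, Matrix.one_mul, Matrix.mul_one]
      rw [Matrix.mul_assoc (Omat t α β * Jmat t * Pmat t α β * Jmat t), hΩinv, Matrix.mul_one]
      simp only [Matrix.mul_assoc]
    have key1 : (((Omat t α β) ⊗ₖ RB) * KD *
          ((Jmat t * onesCol t) ⊗ₖ (1 : Matrix (Fin n) (Fin n) ℂ))) *
          ((1 : Matrix (Fin 1) (Fin 1) ℂ) ⊗ₖ D)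
        = ((Omat t α β * Jmat t * onesCol t) ⊗ₖ RB) -
          ((Omat t α β * Jmat t * Pmat t α β * Jmat t * (Omat t α β)⁻¹) ⊗ₖ
            (1 : Matrix (Fin p) (Fin p) ℂ)) *
          (((Omat t α β) ⊗ₖ RB) * KD *
            ((Jmat t * onesCol t) ⊗ₖ (1 : Matrix (Fin n) (Fin n) ℂ))) := by
      calc (((Omat t α β) ⊗ₖ RB) * KD *
            ((Jmat t * onesCol t) ⊗ₖ (1 : Matrix (Fin n) (Fin n) ℂ))) *
            ((1 : Matrix (Fin 1) (Fin 1) ℂ) ⊗ₖ D)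
          = ((Omat t α β) ⊗ₖ RB) * (KD * ((1 : Matrix (Fin t) (Fin t) ℂ) ⊗ₖ D)) *
            ((Jmat t * onesCol t) ⊗ₖ (1 : Matrix (Fin n) (Fin n) ℂ)) := by
            rw [Matrix.mul_assoc (((Omat t α β) ⊗ₖ RB) * KD), swap1, ← Matrix.mul_assoc,
              Matrix.mul_assoc ((Omat t α β) ⊗ₖ RB)]
        _ = ((Omat t α β) ⊗ₖ RB) *
            (1 - ((Jmat t * Pmat t α β * Jmat t) ⊗ₖ (1 : Matrix (Fin n) (Fin n) ℂ)) * KD) *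
            ((Jmat t * onesCol t) ⊗ₖ (1 : Matrix (Fin n) (Fin n) ℂ)) := by
            rw [hsplit, Matrix.mul_sub, hKM, hcommK]
        _ = ((Omat t α β * Jmat t * onesCol t) ⊗ₖ RB) -
            ((Omat t α β * Jmat t * Pmat t α β * Jmat t * (Omat t α β)⁻¹) ⊗ₖ
              (1 : Matrix (Fin p) (Fin p) ℂ)) *
            (((Omat t α β) ⊗ₖ RB) * KD *
              ((Jmat t * onesCol t) ⊗ₖ (1 : Matrix (Fin n) (Fin n) ℂ))) := by
            rw [Matrix.mul_sub, Matrix.mul_one, Matrix.sub_mul]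
            congr 1
            · rw [← Matrix.mul_kronecker_mul, Matrix.mul_one, ← Matrix.mul_assoc]
            · rw [← Matrix.mul_assoc, ← hQ]
              simp only [Matrix.mul_assoc]
    rw [hVD, aux_sub_colD, key1, aux_sub_sub, aux_sub_left]
  · -- Part 2
    have hJPJt : (Jmat t * Pmat t β α * Jmat t)ᵀ = Jmat t * (Pmat t β α)ᵀ * Jmat t := by
      rw [Matrix.transpose_mul, Matrix.transpose_mul]
      simp only [Jmat, Matrix.diagonal_transpose]
      simp only [Matrix.mul_assoc]
    have hNdet : IsUnit ((Jmat t * (Pmat t β α)ᵀ * Jmat t) ⊗ₖ (1 : Matrix (Fin m) (Fin m) ℂ) +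
        (1 : Matrix (Fin t) (Fin t) ℂ) ⊗ₖ A).det := by
      refine aux_isUnit_det_kron _ _ (fun i j h => ?_) (fun i => ?_)
      · rw [JXJ_apply, Matrix.transpose_apply, Pmat_upper t β α h, mul_zero]
      · rw [JXJ_diag, Matrix.transpose_apply, Pmat_diag]
        exact (hshift _ (htsub i)).2.2
    have hKAT : KAᵀ = ((Jmat t * (Pmat t β α)ᵀ * Jmat t) ⊗ₖ (1 : Matrix (Fin m) (Fin m) ℂ) +
        (1 : Matrix (Fin t) (Fin t) ℂ) ⊗ₖ A)⁻¹ := by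
      rw [hKA, Matrix.transpose_nonsing_inv]
      congr 1
      rw [Matrix.transpose_add, ← Matrix.kroneckerMap_transpose, ← Matrix.kroneckerMap_transpose,
        Matrix.transpose_one, Matrix.transpose_one, Matrix.transpose_transpose, hJPJt]
    have hNK : ((Jmat t * (Pmat t β α)ᵀ * Jmat t) ⊗ₖ (1 : Matrix (Fin m) (Fin m) ℂ) +
        (1 : Matrix (Fin t) (Fin t) ℂ) ⊗ₖ A)⁻¹ *
        ((Jmat t * (Pmat t β α)ᵀ * Jmat t) ⊗ₖ (1 : Matrix (Fin m) (Fin m) ℂ) +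
        (1 : Matrix (Fin t) (Fin t) ℂ) ⊗ₖ A) = 1 := Matrix.nonsing_inv_mul _ hNdet
    have hcommA : ((1 : Matrix (Fin t) (Fin t) ℂ) ⊗ₖ A) *
        ((Jmat t * (Pmat t β α)ᵀ * Jmat t) ⊗ₖ (1 : Matrix (Fin m) (Fin m) ℂ) +
          (1 : Matrix (Fin t) (Fin t) ℂ) ⊗ₖ A)⁻¹
        = ((Jmat t * (Pmat t β α)ᵀ * Jmat t) ⊗ₖ (1 : Matrix (Fin m) (Fin m) ℂ) +
          (1 : Matrix (Fin t) (Fin t) ℂ) ⊗ₖ A)⁻¹ *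
          ((1 : Matrix (Fin t) (Fin t) ℂ) ⊗ₖ A) := by
      refine (aux_inv_comm _ _ hNdet ?_).symm
      simp only [add_mul, mul_add, ← Matrix.mul_kronecker_mul, Matrix.one_mul, Matrix.mul_one]
    have hstep : ((1 : Matrix (Fin t) (Fin t) ℂ) ⊗ₖ A) *
        ((Jmat t * (Pmat t β α)ᵀ * Jmat t) ⊗ₖ (1 : Matrix (Fin m) (Fin m) ℂ) +
          (1 : Matrix (Fin t) (Fin t) ℂ) ⊗ₖ A)⁻¹
        = 1 - ((Jmat t * (Pmat t β α)ᵀ * Jmat t) ⊗ₖ (1 : Matrix (Fin m) (Fin m) ℂ) +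
            (1 : Matrix (Fin t) (Fin t) ℂ) ⊗ₖ A)⁻¹ *
          ((Jmat t * (Pmat t β α)ᵀ * Jmat t) ⊗ₖ (1 : Matrix (Fin m) (Fin m) ℂ)) := by
      rw [hcommA]
      refine eq_sub_of_add_eq ?_
      rw [← Matrix.mul_add, add_comm ((1 : Matrix (Fin t) (Fin t) ℂ) ⊗ₖ A), hNK]
    have swap2 : ((1 : Matrix (Fin 1) (Fin 1) ℂ) ⊗ₖ A) *
        (((onesCol t)ᵀ * Jmat t) ⊗ₖ (1 : Matrix (Fin m) (Fin m) ℂ))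
        = (((onesCol t)ᵀ * Jmat t) ⊗ₖ (1 : Matrix (Fin m) (Fin m) ℂ)) *
          ((1 : Matrix (Fin t) (Fin t) ℂ) ⊗ₖ A) := by
      simp only [← Matrix.mul_kronecker_mul, Matrix.one_mul, Matrix.mul_one]
    have swap3 : ((Jmat t * (Pmat t β α)ᵀ * Jmat t) ⊗ₖ (1 : Matrix (Fin m) (Fin m) ℂ)) *
        ((1 : Matrix (Fin t) (Fin t) ℂ) ⊗ₖ LB)
        = ((1 : Matrix (Fin t) (Fin t) ℂ) ⊗ₖ LB) *
          ((Jmat t * (Pmat t β α)ᵀ * Jmat t) ⊗ₖ (1 : Matrix (Fin p) (Fin p) ℂ)) := by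
      simp only [← Matrix.mul_kronecker_mul, Matrix.one_mul, Matrix.mul_one]
    have key2 : ((1 : Matrix (Fin 1) (Fin 1) ℂ) ⊗ₖ A) *
          ((((onesCol t)ᵀ * Jmat t) ⊗ₖ (1 : Matrix (Fin m) (Fin m) ℂ)) * KAᵀ *
            ((1 : Matrix (Fin t) (Fin t) ℂ) ⊗ₖ LB))
        = (((onesCol t)ᵀ * Jmat t) ⊗ₖ LB) -
          ((((onesCol t)ᵀ * Jmat t) ⊗ₖ (1 : Matrix (Fin m) (Fin m) ℂ)) * KAᵀ *
            ((1 : Matrix (Fin t) (Fin t) ℂ) ⊗ₖ LB)) *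
          ((Jmat t * (Pmat t β α)ᵀ * Jmat t) ⊗ₖ (1 : Matrix (Fin p) (Fin p) ℂ)) := by
      rw [hKAT]
      calc ((1 : Matrix (Fin 1) (Fin 1) ℂ) ⊗ₖ A) *
            ((((onesCol t)ᵀ * Jmat t) ⊗ₖ (1 : Matrix (Fin m) (Fin m) ℂ)) *
              ((Jmat t * (Pmat t β α)ᵀ * Jmat t) ⊗ₖ (1 : Matrix (Fin m) (Fin m) ℂ) +
                (1 : Matrix (Fin t) (Fin t) ℂ) ⊗ₖ A)⁻¹ *
              ((1 : Matrix (Fin t) (Fin t) ℂ) ⊗ₖ LB))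
          = (((onesCol t)ᵀ * Jmat t) ⊗ₖ (1 : Matrix (Fin m) (Fin m) ℂ)) *
            (((1 : Matrix (Fin t) (Fin t) ℂ) ⊗ₖ A) *
              ((Jmat t * (Pmat t β α)ᵀ * Jmat t) ⊗ₖ (1 : Matrix (Fin m) (Fin m) ℂ) +
                (1 : Matrix (Fin t) (Fin t) ℂ) ⊗ₖ A)⁻¹) *
            ((1 : Matrix (Fin t) (Fin t) ℂ) ⊗ₖ LB) := by
            rw [← Matrix.mul_assoc, ← Matrix.mul_assoc, swap2,
              Matrix.mul_assoc (((onesCol t)ᵀ * Jmat t) ⊗ₖ (1 : Matrix (Fin m) (Fin m) ℂ))]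
        _ = (((onesCol t)ᵀ * Jmat t) ⊗ₖ (1 : Matrix (Fin m) (Fin m) ℂ)) *
            (1 - ((Jmat t * (Pmat t β α)ᵀ * Jmat t) ⊗ₖ (1 : Matrix (Fin m) (Fin m) ℂ) +
                (1 : Matrix (Fin t) (Fin t) ℂ) ⊗ₖ A)⁻¹ *
              ((Jmat t * (Pmat t β α)ᵀ * Jmat t) ⊗ₖ (1 : Matrix (Fin m) (Fin m) ℂ))) *
            ((1 : Matrix (Fin t) (Fin t) ℂ) ⊗ₖ LB) := by
            rw [hstep]
        _ = (((onesCol t)ᵀ * Jmat t) ⊗ₖ LB) -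
            ((((onesCol t)ᵀ * Jmat t) ⊗ₖ (1 : Matrix (Fin m) (Fin m) ℂ)) *
              ((Jmat t * (Pmat t β α)ᵀ * Jmat t) ⊗ₖ (1 : Matrix (Fin m) (Fin m) ℂ) +
                (1 : Matrix (Fin t) (Fin t) ℂ) ⊗ₖ A)⁻¹ *
              ((1 : Matrix (Fin t) (Fin t) ℂ) ⊗ₖ LB)) *
            ((Jmat t * (Pmat t β α)ᵀ * Jmat t) ⊗ₖ (1 : Matrix (Fin p) (Fin p) ℂ)) := by
            rw [Matrix.mul_sub, Matrix.mul_one, Matrix.sub_mul]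
            congr 1
            · rw [← Matrix.mul_kronecker_mul, Matrix.mul_one, Matrix.one_mul]
            · simp only [Matrix.mul_assoc] at swap3 ⊢
              rw [swap3]
    rw [hUA, aux_sub_rowA, key2, aux_sub_sub, aux_sub_right]
end

section
/- The matrix I − Y^D Y^A is invertible with (I − Y^D Y^A)^{−1} = I + R^B D_α^{−1} C (A_β − B D_α^{−1} C)^{−1} L^B, the matrix I − Y^A Y^D is invertible, and the matrices E_0, F_0, G_0, H_0 admit the low-rank representations H_0 = L_B (I − Y^D Y^A)^{−1} R_B, E_0 = D̃ + L_C (I − Y^A Y^D)^{−1} Y^A R_B, F_0 = Ã + L_B (I − Y^D Y^A)^{−1} Y^D R_C, and G_0 = L_C (I − Y^A Y^D)^{−1} R_C. -/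
open Matrix

lemma EFGH_key_lemma {m p : ℕ} (Aβ Ai S Si : Matrix (Fin m) (Fin m) ℂ)
    (L : Matrix (Fin m) (Fin p) ℂ) (K : Matrix (Fin p) (Fin m) ℂ)
    (hA1 : Aβ * Ai = 1) (hA2 : Ai * Aβ = 1)
    (hS1 : S * Si = 1) (hS2 : Si * S = 1)
    (hX : L * K = Aβ - S) :
    Ai * L * (1 + K * Si * L) = Si * L ∧
    (1 - K * Ai * L) * (1 + K * Si * L) = 1 ∧
    (1 + K * Si * L) * (1 - K * Ai * L) = 1 := by
  have hb : Ai * L * (1 + K * Si * L) = Si * L := by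
    have h1 : Ai * L * (K * Si * L) = Si * L - Ai * L := by
      calc Ai * L * (K * Si * L) = Ai * ((L * K) * (Si * L)) := by
            simp only [Matrix.mul_assoc]
        _ = Ai * Aβ * (Si * L) - Ai * (S * Si * L) := by
            rw [hX]; simp only [Matrix.sub_mul, Matrix.mul_sub, Matrix.mul_assoc]
        _ = Si * L - Ai * L := by rw [hA2, hS1]; simp
    rw [Matrix.mul_add, Matrix.mul_one, h1]; abel
  refine ⟨hb, ?_, ?_⟩
  · have : K * Ai * L * (1 + K * Si * L) = K * (Si * L) := by
      calc K * Ai * L * (1 + K * Si * L) = K * (Ai * L * (1 + K * Si * L)) := by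
            simp only [Matrix.mul_assoc]
        _ = K * (Si * L) := by rw [hb]
    rw [Matrix.sub_mul, Matrix.one_mul, this, ← Matrix.mul_assoc K Si L]
    abel
  · have hqp : K * Si * L * (K * Ai * L) = K * Si * L - K * Ai * L := by
      calc K * Si * L * (K * Ai * L) = K * (Si * ((L * K) * (Ai * L))) := by
            simp only [Matrix.mul_assoc]
        _ = K * (Si * (Aβ * (Ai * L)) - Si * S * (Ai * L)) := by
            rw [hX]; simp only [Matrix.sub_mul, Matrix.mul_sub, Matrix.mul_assoc]
        _ = K * (Si * (Aβ * Ai) * L - Ai * L) := by rw [hS2]; simp [Matrix.mul_assoc]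
        _ = K * Si * L - K * Ai * L := by rw [hA1]; simp [Matrix.mul_sub, Matrix.mul_assoc]
    rw [Matrix.add_mul, Matrix.one_mul, Matrix.mul_sub, Matrix.mul_one, hqp]
    abel

/-- Low-rank representations of `E₀, F₀, G₀, H₀`:
`I − Y^D Y^A` is invertible with inverse `I + R^B D_α⁻¹ C (A_β − B D_α⁻¹ C)⁻¹ L^B`,
`I − Y^A Y^D` is invertible, and
`H₀ = L_B (I − Y^D Y^A)⁻¹ R_B`, `E₀ = D̃ + L_C (I − Y^A Y^D)⁻¹ Y^A R_B`,
`F₀ = Ã + L_B (I − Y^D Y^A)⁻¹ Y^D R_C`, `G₀ = L_C (I − Y^A Y^D)⁻¹ R_C`. -/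
theorem EFGH_low_rank_representations {m n p q : ℕ}
    (hm : 0 < m) (hn : 0 < n) (hp : 0 < p) (hq : 0 < q)
    (A : Matrix (Fin m) (Fin m) ℂ) (D : Matrix (Fin n) (Fin n) ℂ)
    (LB : Matrix (Fin m) (Fin p) ℂ) (RB : Matrix (Fin p) (Fin n) ℂ)
    (LC : Matrix (Fin n) (Fin q) ℂ) (RC : Matrix (Fin q) (Fin m) ℂ)
    (α β : ℂ)
    (hDα : IsUnit (α • (1 : Matrix (Fin n) (Fin n) ℂ) + D))
    (hAβ : IsUnit (β • (1 : Matrix (Fin m) (Fin m) ℂ) + A))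
    (hS : IsUnit ((β • 1 + A) - (LB * RB) * (α • 1 + D)⁻¹ * (LC * RC)))
    (E₀ : Matrix (Fin n) (Fin n) ℂ) (F₀ : Matrix (Fin m) (Fin m) ℂ)
    (G₀ : Matrix (Fin n) (Fin m) ℂ) (H₀ : Matrix (Fin m) (Fin n) ℂ)
    (hE : E₀ = -((((α • 1 + D) - (LC * RC) * (β • 1 + A)⁻¹ * (LB * RB))⁻¹) *
      (((-β) • 1 + D) - (LC * RC) * (β • 1 + A)⁻¹ * (LB * RB))))
    (hF : F₀ = -((((β • 1 + A) - (LB * RB) * (α • 1 + D)⁻¹ * (LC * RC))⁻¹) *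
      (((-α) • 1 + A) - (LB * RB) * (α • 1 + D)⁻¹ * (LC * RC))))
    (hG : G₀ = (α + β) • ((((α • 1 + D) - (LC * RC) * (β • 1 + A)⁻¹ * (LB * RB))⁻¹) *
      (LC * RC) * (β • 1 + A)⁻¹))
    (hH : H₀ = (α + β) • ((((β • 1 + A) - (LB * RB) * (α • 1 + D)⁻¹ * (LC * RC))⁻¹) *
      (LB * RB) * (α • 1 + D)⁻¹))
    (Atil : Matrix (Fin m) (Fin m) ℂ) (hAtil : Atil = -((β • 1 + A)⁻¹ * ((-α) • 1 + A)))
    (Dtil : Matrix (Fin n) (Fin n) ℂ) (hDtil : Dtil = -((α • 1 + D)⁻¹ * ((-β) • 1 + D)))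
    (LB' : Matrix (Fin m) (Fin p) ℂ) (hLB' : LB' = (β • 1 + A)⁻¹ * LB)
    (RC' : Matrix (Fin q) (Fin m) ℂ) (hRC' : RC' = (α + β) • (RC * (β • 1 + A)⁻¹))
    (YA : Matrix (Fin q) (Fin p) ℂ) (hYA : YA = RC * (β • 1 + A)⁻¹ * LB)
    (LC' : Matrix (Fin n) (Fin q) ℂ) (hLC' : LC' = (α • 1 + D)⁻¹ * LC)
    (RB' : Matrix (Fin p) (Fin n) ℂ) (hRB' : RB' = (α + β) • (RB * (α • 1 + D)⁻¹))
    (YD : Matrix (Fin p) (Fin q) ℂ) (hYD : YD = RB * (α • 1 + D)⁻¹ * LC) :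
    IsUnit (1 - YD * YA) ∧
    (1 - YD * YA)⁻¹ = 1 + RB * (α • 1 + D)⁻¹ * (LC * RC) *
      ((β • 1 + A) - (LB * RB) * (α • 1 + D)⁻¹ * (LC * RC))⁻¹ * LB ∧
    IsUnit (1 - YA * YD) ∧
    H₀ = LB' * (1 - YD * YA)⁻¹ * RB' ∧
    E₀ = Dtil + LC' * (1 - YA * YD)⁻¹ * YA * RB' ∧
    F₀ = Atil + LB' * (1 - YD * YA)⁻¹ * YD * RC' ∧
    G₀ = LC' * (1 - YA * YD)⁻¹ * RC' := by
  set Ax := β • (1 : Matrix (Fin m) (Fin m) ℂ) + A with hAx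
  set Dx := α • (1 : Matrix (Fin n) (Fin n) ℂ) + D with hDx
  set S := Ax - LB * RB * Dx⁻¹ * (LC * RC) with hSdef
  set T := Dx - LC * RC * Ax⁻¹ * (LB * RB) with hTdef
  have hA1 : Ax * Ax⁻¹ = 1 := Matrix.mul_nonsing_inv _ ((Matrix.isUnit_iff_isUnit_det _).mp hAβ)
  have hA2 : Ax⁻¹ * Ax = 1 := Matrix.nonsing_inv_mul _ ((Matrix.isUnit_iff_isUnit_det _).mp hAβ)
  have hD1 : Dx * Dx⁻¹ = 1 := Matrix.mul_nonsing_inv _ ((Matrix.isUnit_iff_isUnit_det _).mp hDα)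
  have hD2 : Dx⁻¹ * Dx = 1 := Matrix.nonsing_inv_mul _ ((Matrix.isUnit_iff_isUnit_det _).mp hDα)
  have hS1 : S * S⁻¹ = 1 := Matrix.mul_nonsing_inv _ ((Matrix.isUnit_iff_isUnit_det _).mp hS)
  have hS2 : S⁻¹ * S = 1 := Matrix.nonsing_inv_mul _ ((Matrix.isUnit_iff_isUnit_det _).mp hS)
  have hXp : LB * (RB * Dx⁻¹ * (LC * RC)) = Ax - S := by
    rw [hSdef, sub_sub_cancel]; simp only [Matrix.mul_assoc]
  have hXd : (LB * RB) * (Dx⁻¹ * (LC * RC)) = Ax - S := by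
    rw [hSdef, sub_sub_cancel]; simp only [Matrix.mul_assoc]
  have hXq : LC * (RC * Ax⁻¹ * (LB * RB)) = Dx - T := by
    rw [hTdef, sub_sub_cancel]; simp only [Matrix.mul_assoc]
  obtain ⟨keyDb, keyD1, keyD2⟩ :=
    EFGH_key_lemma Ax Ax⁻¹ S S⁻¹ (LB * RB) (Dx⁻¹ * (LC * RC)) hA1 hA2 hS1 hS2 hXd
  have hTfac : T = Dx * (1 - Dx⁻¹ * (LC * RC) * Ax⁻¹ * (LB * RB)) := by
    rw [hTdef, Matrix.mul_sub, Matrix.mul_one]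
    congr 1
    simp only [← Matrix.mul_assoc]
    rw [hD1, Matrix.one_mul]
  have hT1 : T * ((1 + Dx⁻¹ * (LC * RC) * S⁻¹ * (LB * RB)) * Dx⁻¹) = 1 := by
    calc T * ((1 + Dx⁻¹ * (LC * RC) * S⁻¹ * (LB * RB)) * Dx⁻¹)
        = Dx * ((1 - Dx⁻¹ * (LC * RC) * Ax⁻¹ * (LB * RB)) *
            (1 + Dx⁻¹ * (LC * RC) * S⁻¹ * (LB * RB))) * Dx⁻¹ := by
          rw [hTfac]; simp only [Matrix.mul_assoc]
      _ = 1 := by rw [keyD1, Matrix.mul_one, hD1]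
  have hT2 : ((1 + Dx⁻¹ * (LC * RC) * S⁻¹ * (LB * RB)) * Dx⁻¹) * T = 1 := by
    calc ((1 + Dx⁻¹ * (LC * RC) * S⁻¹ * (LB * RB)) * Dx⁻¹) * T
        = (1 + Dx⁻¹ * (LC * RC) * S⁻¹ * (LB * RB)) * ((Dx⁻¹ * Dx) *
            (1 - Dx⁻¹ * (LC * RC) * Ax⁻¹ * (LB * RB))) := by
          rw [hTfac]; simp only [Matrix.mul_assoc]
      _ = 1 := by rw [hD2, Matrix.one_mul]; exact keyD2
  have hTinv : T⁻¹ = (1 + Dx⁻¹ * (LC * RC) * S⁻¹ * (LB * RB)) * Dx⁻¹ :=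
    Matrix.inv_eq_right_inv hT1
  have hTi1 : T * T⁻¹ = 1 := by rw [hTinv]; exact hT1
  have hTi2 : T⁻¹ * T = 1 := by rw [hTinv]; exact hT2
  obtain ⟨keyPb, keyP1, keyP2⟩ :=
    EFGH_key_lemma Ax Ax⁻¹ S S⁻¹ LB (RB * Dx⁻¹ * (LC * RC)) hA1 hA2 hS1 hS2 hXp
  obtain ⟨keyQb, keyQ1, keyQ2⟩ :=
    EFGH_key_lemma Dx Dx⁻¹ T T⁻¹ LC (RC * Ax⁻¹ * (LB * RB)) hD1 hD2 hTi1 hTi2 hXq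
  have hYDYA : YD * YA = RB * Dx⁻¹ * (LC * RC) * Ax⁻¹ * LB := by
    rw [hYD, hYA]; simp only [Matrix.mul_assoc]
  have hYAYD : YA * YD = RC * Ax⁻¹ * (LB * RB) * Dx⁻¹ * LC := by
    rw [hYA, hYD]; simp only [Matrix.mul_assoc]
  have hUinv : (1 - YD * YA)⁻¹ = 1 + RB * Dx⁻¹ * (LC * RC) * S⁻¹ * LB := by
    rw [hYDYA]; exact Matrix.inv_eq_right_inv keyP1
  have hVinv : (1 - YA * YD)⁻¹ = 1 + RC * Ax⁻¹ * (LB * RB) * T⁻¹ * LC := by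
    rw [hYAYD]; exact Matrix.inv_eq_right_inv keyQ1
  have hUnit1 : IsUnit (1 - YD * YA) := by
    rw [hYDYA]
    exact ⟨⟨_, 1 + RB * Dx⁻¹ * (LC * RC) * S⁻¹ * LB, keyP1, keyP2⟩, rfl⟩
  have hUnit2 : IsUnit (1 - YA * YD) := by
    rw [hYAYD]
    exact ⟨⟨_, 1 + RC * Ax⁻¹ * (LB * RB) * T⁻¹ * LC, keyQ1, keyQ2⟩, rfl⟩
  have hcA : ((-α) • (1 : Matrix (Fin m) (Fin m) ℂ) + A) = Ax - (α + β) • 1 := by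
    rw [hAx, add_smul, neg_smul]; abel
  have hcD : ((-β) • (1 : Matrix (Fin n) (Fin n) ℂ) + D) = Dx - (α + β) • 1 := by
    rw [hDx, add_smul, neg_smul]; abel
  have hF2 : F₀ = (α + β) • S⁻¹ - 1 := by
    have h : ((-α) • 1 + A) - LB * RB * Dx⁻¹ * (LC * RC) = S - (α + β) • 1 := by
      rw [hcA, hSdef]; abel
    rw [hF, h, Matrix.mul_sub, hS2, Matrix.mul_smul, Matrix.mul_one, neg_sub]
  have hAtil2 : Atil = (α + β) • Ax⁻¹ - 1 := by
    rw [hAtil, hcA, Matrix.mul_sub, hA2, Matrix.mul_smul, Matrix.mul_one, neg_sub]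
  have hE2 : E₀ = (α + β) • T⁻¹ - 1 := by
    have h : ((-β) • 1 + D) - LC * RC * Ax⁻¹ * (LB * RB) = T - (α + β) • 1 := by
      rw [hcD, hTdef]; abel
    rw [hE, h, Matrix.mul_sub, hTi2, Matrix.mul_smul, Matrix.mul_one, neg_sub]
  have hDtil2 : Dtil = (α + β) • Dx⁻¹ - 1 := by
    rw [hDtil, hcD, Matrix.mul_sub, hD2, Matrix.mul_smul, Matrix.mul_one, neg_sub]
  have innerF : S⁻¹ * LB * (RB * Dx⁻¹ * LC) * (RC * Ax⁻¹) = S⁻¹ - Ax⁻¹ := by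
    calc S⁻¹ * LB * (RB * Dx⁻¹ * LC) * (RC * Ax⁻¹)
        = S⁻¹ * (LB * (RB * Dx⁻¹ * (LC * RC))) * Ax⁻¹ := by simp only [Matrix.mul_assoc]
      _ = S⁻¹ * (Ax - S) * Ax⁻¹ := by rw [hXp]
      _ = S⁻¹ - Ax⁻¹ := by
          rw [Matrix.mul_sub, hS2, Matrix.sub_mul, Matrix.one_mul,
            Matrix.mul_assoc, hA1, Matrix.mul_one]
  have innerE : T⁻¹ * LC * (RC * Ax⁻¹ * LB) * (RB * Dx⁻¹) = T⁻¹ - Dx⁻¹ := by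
    calc T⁻¹ * LC * (RC * Ax⁻¹ * LB) * (RB * Dx⁻¹)
        = T⁻¹ * (LC * (RC * Ax⁻¹ * (LB * RB))) * Dx⁻¹ := by simp only [Matrix.mul_assoc]
      _ = T⁻¹ * (Dx - T) * Dx⁻¹ := by rw [hXq]
      _ = T⁻¹ - Dx⁻¹ := by
          rw [Matrix.mul_sub, hTi2, Matrix.sub_mul, Matrix.one_mul,
            Matrix.mul_assoc, hD1, Matrix.mul_one]
  refine ⟨hUnit1, hUinv, hUnit2, ?_, ?_, ?_, ?_⟩
  · -- H₀
    rw [hH, hLB', hRB', hUinv, Matrix.mul_smul, keyPb]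
    simp only [Matrix.mul_assoc, Matrix.mul_smul]
  · -- E₀
    rw [hE2, hDtil2, hLC', hRB', hVinv, hYA, keyQb, Matrix.mul_smul, innerE, smul_sub]
    abel
  · -- F₀
    rw [hF2, hAtil2, hLB', hRC', hUinv, hYD, keyPb, Matrix.mul_smul, innerF, smul_sub]
    abel
  · -- G₀
    rw [hG, hLC', hRC', hVinv, Matrix.mul_smul, keyQb]
    simp only [Matrix.mul_assoc, Matrix.mul_smul]
end
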